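/- arXiv:1703.05409 — 6 statements merged into one kernel-verified Lean document; each statement's English description precedes it below -/
import Mathlib

section
/- If p(x) = Σ_{i=0}^n b_i x^i is a polynomial with strictly positive real coefficients all of whose complex roots are real, then the coefficient sequence is log-concave: b_i^2 ≥ b_{i-1} b_{i+1} for all 0 < i < n. -/
open Polynomial

/-- Auxiliary predicate: all coefficients up to the degree are positive, and the
coefficient sequence is log-concave. -/
def GoodPoly (q : Polynomial ℝ) : Prop :=
  (∀ i ≤ q.natDegree, 0 < q.coeff i) ∧
    ∀ k : ℕ, q.coeff k * q.coeff (k + 2) ≤ q.coeff (k + 1) ^ 2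

lemma goodPoly_coeff_nonneg {q : Polynomial ℝ} (h : GoodPoly q) (i : ℕ) : 0 ≤ q.coeff i := by
  rcases le_or_gt i q.natDegree with hi | hi
  · exact (h.1 i hi).le
  · simp [coeff_eq_zero_of_natDegree_lt hi]

lemma goodPoly_C {c : ℝ} (hc : 0 < c) : GoodPoly (C c) := by
  constructor
  · intro i hi
    simp only [natDegree_C, Nat.le_zero] at hi
    simpa [hi] using hc
  · intro k
    have h2 : (C c).coeff (k + 2) = 0 := by simp [coeff_C]
    have h1 : 0 ≤ (C c).coeff (k + 1) ^ 2 := sq_nonneg _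
    simpa [h2] using h1

lemma goodPoly_cross {q : Polynomial ℝ} (h : GoodPoly q) (j : ℕ) :
    q.coeff j * q.coeff (j + 3) ≤ q.coeff (j + 1) * q.coeff (j + 2) := by
  set a : ℕ → ℝ := fun i => q.coeff i with ha
  have hnn : ∀ i, 0 ≤ a i := goodPoly_coeff_nonneg h
  rcases eq_or_lt_of_le (hnn (j + 2)) with h2 | h2
  · -- a (j+2) = 0, hence j+2 > natDegree, hence a (j+3) = 0
    have hd : q.natDegree < j + 2 := by
      by_contra hcon
      push_neg at hcon
      exact absurd (h.1 (j + 2) hcon) (by simp only [not_lt]; exact le_of_eq h2.symm)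
    have h3 : a (j + 3) = 0 := coeff_eq_zero_of_natDegree_lt (by omega)
    have : a j * a (j + 3) = 0 := by rw [h3]; ring
    rw [this]
    exact mul_nonneg (hnn _) (hnn _)
  · rcases eq_or_lt_of_le (hnn (j + 1)) with h1 | h1
    · -- a (j+1) = 0 with a (j+2) > 0 : impossible unless degrees force a(j+2)=0
      have hd : q.natDegree < j + 1 := by
        by_contra hcon
        push_neg at hcon
        exact absurd (h.1 (j + 1) hcon) (by simp only [not_lt]; exact le_of_eq h1.symm)
      have : a (j + 2) = 0 := coeff_eq_zero_of_natDegree_lt (by omega)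
      exact absurd this (ne_of_gt h2)
    · have A := h.2 j
      have B := h.2 (j + 1)
      have B' : a (j + 1) * a (j + 3) ≤ a (j + 2) ^ 2 := by
        simpa [ha, show j + 1 + 2 = j + 3 by ring, show j + 1 + 1 = j + 2 by ring] using B
      nlinarith [hnn j, hnn (j + 1), hnn (j + 2), hnn (j + 3), mul_pos h1 h2]

lemma goodPoly_mul {q : Polynomial ℝ} {r : ℝ} (hr : 0 < r) (hq : q ≠ 0) (h : GoodPoly q) :
    GoodPoly ((X + C r) * q) := by
  set a : ℕ → ℝ := fun i => q.coeff i with ha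
  have hnn : ∀ i, 0 ≤ a i := goodPoly_coeff_nonneg h
  have hXr : (X + C r) ≠ 0 := X_add_C_ne_zero r
  have hdeg : ((X + C r) * q).natDegree = 1 + q.natDegree := by
    rw [natDegree_mul hXr hq, natDegree_X_add_C]
  have hc0 : ((X + C r) * q).coeff 0 = r * a 0 := by
    rw [mul_coeff_zero]
    simp [ha]
  have hcs : ∀ k : ℕ, ((X + C r) * q).coeff (k + 1) = a k + r * a (k + 1) := by
    intro k
    rw [add_mul, coeff_add, coeff_X_mul, coeff_C_mul]
  constructor
  · intro i hi
    rcases i with _ | k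
    · rw [hc0]
      exact mul_pos hr (h.1 0 (Nat.zero_le _))
    · rw [hcs k]
      have hk : k ≤ q.natDegree := by omega
      have : 0 < a k := h.1 k hk
      have : 0 ≤ r * a (k + 1) := mul_nonneg hr.le (hnn _)
      nlinarith [h.1 k hk]
  · intro k
    rcases k with _ | j
    · -- c0 * c2 ≤ c1^2
      rw [hc0, hcs 0, hcs 1]
      have A := h.2 0
      have A' : a 0 * a 2 ≤ a 1 ^ 2 := by simpa [ha] using A
      have e1 : (0:ℕ) + 1 = 1 := rfl
      have e2 : (1:ℕ) + 1 = 2 := rfl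
      rw [e1, e2]
      nlinarith [hnn 0, hnn 1, hnn 2, mul_nonneg (hnn 0) (hnn 1), hr.le,
        mul_nonneg (mul_nonneg hr.le hr.le) (sub_nonneg.mpr A')]
    · rw [hcs j, hcs (j + 1), hcs (j + 2)]
      have A : a j * a (j + 2) ≤ a (j + 1) ^ 2 := by simpa [ha] using h.2 j
      have B : a (j + 1) * a (j + 3) ≤ a (j + 2) ^ 2 := by
        simpa [ha, show j + 1 + 2 = j + 3 by ring, show j + 1 + 1 = j + 2 by ring] using h.2 (j + 1)
      have Cc : a j * a (j + 3) ≤ a (j + 1) * a (j + 2) := goodPoly_cross h j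
      have e1 : j + 1 + 1 = j + 2 := by ring
      have e2 : j + 2 + 1 = j + 3 := by ring
      rw [e1, e2]
      nlinarith [hnn j, hnn (j + 1), hnn (j + 2), hnn (j + 3), hr.le, sq_nonneg r]

lemma goodPoly_of_roots (N : ℕ) :
    ∀ p : Polynomial ℝ, p.natDegree ≤ N → 0 < p.leadingCoeff →
      (∀ z : ℂ, (p.map (algebraMap ℝ ℂ)).IsRoot z → z.im = 0 ∧ z.re < 0) → GoodPoly p := by
  induction N with
  | zero =>
      intro p hdeg hlc _
      have h0 : p.natDegree = 0 := Nat.le_zero.mp hdeg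
      have hp : p = C (p.coeff 0) := eq_C_of_natDegree_eq_zero h0
      have hc : 0 < p.coeff 0 := by
        have : p.leadingCoeff = p.coeff 0 := by rw [leadingCoeff, h0]
        rwa [this] at hlc
      rw [hp]
      exact goodPoly_C hc
  | succ N ih =>
      intro p hdeg hlc hroots
      rcases Nat.eq_zero_or_pos p.natDegree with h0 | h0
      · have hp : p = C (p.coeff 0) := eq_C_of_natDegree_eq_zero h0
        have hc : 0 < p.coeff 0 := by
          have : p.leadingCoeff = p.coeff 0 := by rw [leadingCoeff, h0]
          rwa [this] at hlc
        rw [hp]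
        exact goodPoly_C hc
      · have hp0 : p ≠ 0 := fun h => by simp [h] at hlc
        have hmdeg : 0 < (p.map (algebraMap ℝ ℂ)).degree := by
          rw [degree_map]
          exact natDegree_pos_iff_degree_pos.mp h0
        obtain ⟨z, hz⟩ := Complex.exists_root hmdeg
        obtain ⟨him, hre⟩ := hroots z hz
        set x : ℝ := z.re with hx
        have hzx : z = (x : ℂ) := Complex.ext rfl (by simp [him])
        have hrootx : p.IsRoot x := by
          have : (p.map (algebraMap ℝ ℂ)).eval ((algebraMap ℝ ℂ) x) = 0 := by
            rw [show (algebraMap ℝ ℂ) x = (x : ℂ) from rfl, ← hzx]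
            exact hz
          rw [eval_map, eval₂_hom] at this
          exact (map_eq_zero_iff (algebraMap ℝ ℂ) (algebraMap ℝ ℂ).injective).mp this
        set q : Polynomial ℝ := p / (X - C x) with hqdef
        have key : (X - C x) * q = p := mul_div_eq_iff_isRoot.mpr hrootx
        have hq0 : q ≠ 0 := by
          intro h
          rw [h, mul_zero] at key
          exact hp0 key.symm
        have hXx : (X - C x : Polynomial ℝ) ≠ 0 := X_sub_C_ne_zero x
        have hqdeg : p.natDegree = 1 + q.natDegree := by
          rw [← key, natDegree_mul hXx hq0, natDegree_X_sub_C]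
        have hqlc : 0 < q.leadingCoeff := by
          have : p.leadingCoeff = (X - C x).leadingCoeff * q.leadingCoeff := by
            rw [← key, leadingCoeff_mul]
          rw [leadingCoeff_X_sub_C, one_mul] at this
          rwa [this] at hlc
        have hqroots : ∀ w : ℂ, (q.map (algebraMap ℝ ℂ)).IsRoot w → w.im = 0 ∧ w.re < 0 := by
          intro w hw
          apply hroots w
          have : p.map (algebraMap ℝ ℂ) =
              ((X - C x).map (algebraMap ℝ ℂ)) * (q.map (algebraMap ℝ ℂ)) := by
            rw [← Polynomial.map_mul, key]
          simp [IsRoot, this, hw.eq_zero]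
        have hgoodq : GoodPoly q := ih q (by omega) hqlc hqroots
        have hfact : p = (X + C (-x)) * q := by
          rw [← key]
          congr 1
          rw [map_neg, ← sub_eq_add_neg]
        rw [hfact]
        exact goodPoly_mul (by linarith) hq0 hgoodq

theorem realRooted_logConcave (p : Polynomial ℝ) (n : ℕ) (hn : p.natDegree = n)
    (hpos : ∀ i ≤ n, 0 < p.coeff i)
    (hreal : ∀ z : ℂ, (p.map (algebraMap ℝ ℂ)).IsRoot z → z.im = 0) :
    ∀ i, 0 < i → i < n → p.coeff (i - 1) * p.coeff (i + 1) ≤ (p.coeff i) ^ 2 := by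
  have hpos' : ∀ i ≤ p.natDegree, 0 < p.coeff i := by
    intro i hi; exact hpos i (hn ▸ hi)
  have hlc : 0 < p.leadingCoeff := by
    rw [leadingCoeff]
    exact hpos' _ le_rfl
  have hroots : ∀ z : ℂ, (p.map (algebraMap ℝ ℂ)).IsRoot z → z.im = 0 ∧ z.re < 0 := by
    intro z hz
    have him := hreal z hz
    refine ⟨him, ?_⟩
    set x : ℝ := z.re with hx
    have hzx : z = (x : ℂ) := Complex.ext rfl (by simp [him])
    have hrootx : p.IsRoot x := by
      have : (p.map (algebraMap ℝ ℂ)).eval ((algebraMap ℝ ℂ) x) = 0 := by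
        rw [show (algebraMap ℝ ℂ) x = (x : ℂ) from rfl, ← hzx]
        exact hz
      rw [eval_map, eval₂_hom] at this
      exact (map_eq_zero_iff (algebraMap ℝ ℂ) (algebraMap ℝ ℂ).injective).mp this
    by_contra hcon
    push_neg at hcon
    -- x ≥ 0, so p.eval x > 0, contradiction
    have heval : p.eval x = ∑ i ∈ Finset.range (p.natDegree + 1), p.coeff i * x ^ i :=
      eval_eq_sum_range x
    have hpospt : 0 < p.eval x := by
      rw [heval]
      have h0mem : (0 : ℕ) ∈ Finset.range (p.natDegree + 1) := by simp
      have hterm0 : 0 < p.coeff 0 * x ^ 0 := by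
        simpa using hpos' 0 (Nat.zero_le _)
      refine Finset.sum_pos' (fun i _ => ?_) ⟨0, h0mem, hterm0⟩
      apply mul_nonneg _ (pow_nonneg hcon i)
      rcases le_or_gt i p.natDegree with h | h
      · exact (hpos' i h).le
      · simp [coeff_eq_zero_of_natDegree_lt h]
    rw [hrootx] at hpospt
    exact lt_irrefl 0 hpospt
  have hgood : GoodPoly p := goodPoly_of_roots p.natDegree p le_rfl hlc hroots
  intro i hi0 hin
  obtain ⟨k, rfl⟩ : ∃ k, i = k + 1 := ⟨i - 1, by omega⟩
  have := hgood.2 k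
  simpa using this
end

section
/- The independence polynomials of the centipedes satisfy the recurrence I(W_n,x) = (1+x)·I(W_{n-1},x) + x(1+x)·I(W_{n-2},x) for n ≥ 2, with I(W_0,x)=1 and I(W_1,x)=1+2x. -/
open Polynomial

noncomputable def indepPoly {V : Type*} [Finite V] (G : SimpleGraph V) : Polynomial ℝ :=
  haveI := Fintype.ofFinite V
  haveI := Classical.decPred fun s : Finset V => ∀ u ∈ s, ∀ v ∈ s, ¬G.Adj u v
  ∑ s ∈ Finset.univ.filter (fun s : Finset V => ∀ u ∈ s, ∀ v ∈ s, ¬G.Adj u v), X ^ s.card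

/-- The `n`-centipede: a path on `n` vertices `(i, false)` with a pendant vertex
`(i, true)` attached to each path vertex. -/
def centipede (n : ℕ) : SimpleGraph (Fin n × Bool) :=
  SimpleGraph.fromRel (fun a b =>
    (a.2 = false ∧ b.2 = false ∧ (a.1 : ℕ) + 1 = (b.1 : ℕ)) ∨
    (a.1 = b.1 ∧ a.2 = false ∧ b.2 = true))

/-!
Write `I(S)` for the independence polynomial of the subgraph of `W_N` induced on a vertex set `S`.
Sorting independent sets by whether they contain a vertex `v` gives
`I(S) = I(S - v) + x I(S - N[v])`.
Let `T_k` consist of the first `k` segments of the centipede and `T'_k` of `T_k` without its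
last spine vertex. Deleting the spine vertex of segment `k + 1` gives
`I(T_{k+1}) = I(T'_{k+1}) + x I(T'_k)`, and the leaf of segment `k + 1` is isolated in `T'_{k+1}`,
so `I(T'_{k+1}) = (1 + x) I(T_k)`. As `T_k` induces a copy of `W_k`, eliminating `T'` gives the
recurrence.
-/

open Finset
open scoped Classical

namespace SimpleGraph

variable {V : Type*} (G : SimpleGraph V)

noncomputable def indepPolyOn (S : Finset V) : ℝ[X] :=
  ∑ s ∈ S.powerset.filter (fun s : Finset V => G.IsIndepSet (s : Set V)), X ^ s.card

theorem indepPolyOn_empty : G.indepPolyOn ∅ = 1 := by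
  simp [indepPolyOn, filter_singleton]

theorem indepPoly_eq_indepPolyOn_univ [Fintype V] : indepPoly G = G.indepPolyOn univ := by
  have hindep (s : Finset V) :
      (∀ u ∈ s, ∀ v ∈ s, ¬G.Adj u v) ↔ G.IsIndepSet (s : Set V) :=
    ⟨fun h u hu v hv _ => h u hu v hv, fun h u hu v hv huv => h hu hv (G.ne_of_adj huv) huv⟩
  rw [indepPoly, indepPolyOn, powerset_univ]
  simp only [hindep]
  congr!

theorem indepPolyOn_eq_erase_add {S : Finset V} {v : V} (hv : v ∈ S) :
    G.indepPolyOn S =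
      G.indepPolyOn (S.erase v) + X * G.indepPolyOn ((S.erase v).filter (¬G.Adj v ·)) := by
  set T := S.erase v
  have hvT : v ∉ T := notMem_erase v S
  have hpowerset : (T.filter (¬G.Adj v ·)).powerset =
      T.powerset.filter (fun t => ∀ w ∈ t, ¬G.Adj v w) := by
    ext t
    simp only [mem_powerset, mem_filter, subset_iff]
    grind
  rw [← insert_erase hv, indepPolyOn, sum_filter, sum_powerset_insert hvT,
    indepPolyOn, indepPolyOn, hpowerset, sum_filter, filter_filter,
    sum_filter, mul_sum]
  congr 1
  refine sum_congr rfl fun t ht => ?_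
  have hvt : v ∉ t := notMem_mono (mem_powerset.1 ht) hvT
  have hinsert :
      G.IsIndepSet ↑(insert v t) ↔ (∀ w ∈ t, ¬G.Adj v w) ∧ G.IsIndepSet ↑t := by
    rw [coe_insert, isIndepSet_iff, Set.pairwise_insert_of_notMem (by simpa using hvt)]
    simp only [mem_coe, G.adj_comm _ v, and_self, and_comm]
  simp only [hinsert, card_insert_of_notMem hvt, pow_succ', mul_ite, mul_zero]

theorem indepPolyOn_eq_one_add_X_mul_of_isolated {S : Finset V} {v : V} (hv : v ∈ S)
    (hiso : ∀ w ∈ S, ¬G.Adj v w) : G.indepPolyOn S = (1 + X) * G.indepPolyOn (S.erase v) := by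
  rw [G.indepPolyOn_eq_erase_add hv, filter_true_of_mem fun w hw => hiso w (mem_of_mem_erase hw)]
  ring

theorem indepPolyOn_map {W : Type*} {H : SimpleGraph W} (f : H ↪g G) (S : Finset W) :
    G.indepPolyOn (S.map f.toEmbedding) = H.indepPolyOn S := by
  have hindep (t : Finset W) : G.IsIndepSet ↑(t.image f.toEmbedding) ↔ H.IsIndepSet ↑t := by
    rw [coe_image, isIndepSet_iff, f.toEmbedding.injective.injOn.pairwise_image]
    simp only [IsIndepSet, Set.Pairwise, Function.onFun, RelEmbedding.coe_toEmbedding,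
      f.map_adj_iff]
  rw [indepPolyOn, indepPolyOn, map_eq_image, powerset_image, filter_image,
    sum_image fun s _ t _ h => image_injective f.toEmbedding.injective h]
  refine sum_congr (filter_congr fun t _ => hindep t) fun t _ => ?_
  rw [card_image_of_injective t f.toEmbedding.injective]

end SimpleGraph

open SimpleGraph

theorem centipede_adj_mk {N : ℕ} {i j : Fin N} {a b : Bool} :
    (centipede N).Adj (i, a) (j, b) ↔
      (a = false ∧ b = false ∧ ((i : ℕ) + 1 = j ∨ (j : ℕ) + 1 = i)) ∨
        (i = j ∧ a ≠ b) := by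
  cases a <;> cases b <;> simp [centipede, Fin.ext_iff] <;> omega

def centipedeEmbedding {k N : ℕ} (h : k ≤ N) : centipede k ↪g centipede N where
  toEmbedding := (Fin.castLEEmb h).prodMap (Function.Embedding.refl Bool)
  map_rel_iff' {v w} := by
    obtain ⟨i, a⟩ := v
    obtain ⟨j, b⟩ := w
    simp [centipede_adj_mk, Fin.ext_iff]

def firstSegments (N k : ℕ) : Finset (Fin N × Bool) :=
  univ.filter fun v => (v.1 : ℕ) < k

def firstSegmentsErase (N k : ℕ) : Finset (Fin N × Bool) :=
  univ.filter fun v => (v.1 : ℕ) < k ∧ (v.2 = true ∨ (v.1 : ℕ) + 1 < k)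

@[simp] theorem mem_firstSegments {N k : ℕ} {v : Fin N × Bool} :
    v ∈ firstSegments N k ↔ (v.1 : ℕ) < k := by
  simp [firstSegments]

@[simp] theorem mem_firstSegmentsErase {N k : ℕ} {v : Fin N × Bool} :
    v ∈ firstSegmentsErase N k ↔ (v.1 : ℕ) < k ∧ (v.2 = true ∨ (v.1 : ℕ) + 1 < k) := by
  simp [firstSegmentsErase]

theorem firstSegments_zero (N : ℕ) : firstSegments N 0 = ∅ := by
  simp [firstSegments]

theorem firstSegmentsErase_zero (N : ℕ) : firstSegmentsErase N 0 = ∅ := by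
  simp [firstSegmentsErase]

theorem firstSegments_eq_map {k N : ℕ} (h : k ≤ N) :
    firstSegments N k = univ.map (centipedeEmbedding h).toEmbedding := by
  ext ⟨i, b⟩
  rw [mem_firstSegments, mem_map]
  constructor
  · exact fun hi => ⟨(⟨i, hi⟩, b), mem_univ _, rfl⟩
  · rintro ⟨⟨j, c⟩, -, hj⟩
    exact hj ▸ j.isLt

theorem indepPolyOn_firstSegments {k N : ℕ} (h : k ≤ N) :
    (centipede N).indepPolyOn (firstSegments N k) = indepPoly (centipede k) := by
  rw [firstSegments_eq_map h, indepPolyOn_map, indepPoly_eq_indepPolyOn_univ]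

theorem indepPolyOn_firstSegments_succ {k N : ℕ} (hk : k < N) :
    (centipede N).indepPolyOn (firstSegments N (k + 1)) =
      (centipede N).indepPolyOn (firstSegmentsErase N (k + 1)) +
        X * (centipede N).indepPolyOn (firstSegmentsErase N k) := by
  have hspine : ((⟨k, hk⟩ : Fin N), false) ∈ firstSegments N (k + 1) := by simp
  rw [indepPolyOn_eq_erase_add _ hspine]
  congr 3 <;> ext ⟨i, b⟩ <;>
    simp only [mem_filter, mem_erase, mem_firstSegments, mem_firstSegmentsErase,
      ne_eq, Prod.mk.injEq, Fin.ext_iff, centipede_adj_mk] <;>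
    grind

theorem indepPolyOn_firstSegmentsErase_succ {k N : ℕ} (hk : k < N) :
    (centipede N).indepPolyOn (firstSegmentsErase N (k + 1)) =
      (1 + X) * (centipede N).indepPolyOn (firstSegments N k) := by
  have hleaf : ((⟨k, hk⟩ : Fin N), true) ∈ firstSegmentsErase N (k + 1) := by simp
  have hisolated :
      ∀ w ∈ firstSegmentsErase N (k + 1), ¬(centipede N).Adj (⟨k, hk⟩, true) w := by
    rintro ⟨i, b⟩ hw
    rw [mem_firstSegmentsErase] at hw
    rw [centipede_adj_mk, Fin.ext_iff]
    grind
  rw [indepPolyOn_eq_one_add_X_mul_of_isolated _ hleaf hisolated]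
  congr 2
  ext ⟨i, b⟩
  simp only [mem_erase, mem_firstSegments, mem_firstSegmentsErase, ne_eq, Prod.mk.injEq,
    Fin.ext_iff]
  grind

theorem centipede_recurrence :
    indepPoly (centipede 0) = 1 ∧ indepPoly (centipede 1) = 1 + 2 * X ∧
    ∀ n : ℕ, 2 ≤ n →
      indepPoly (centipede n) =
        (1 + X) * indepPoly (centipede (n - 1)) +
          X * (1 + X) * indepPoly (centipede (n - 2)) := by
  refine ⟨?_, ?_, fun n hn => ?_⟩
  · rw [← indepPolyOn_firstSegments le_rfl, firstSegments_zero, indepPolyOn_empty]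
  · rw [← indepPolyOn_firstSegments le_rfl, indepPolyOn_firstSegments_succ zero_lt_one,
      indepPolyOn_firstSegmentsErase_succ zero_lt_one, firstSegments_zero,
      firstSegmentsErase_zero, indepPolyOn_empty]
    ring
  · obtain ⟨m, rfl⟩ := Nat.exists_eq_add_of_le' hn
    rw [show m + 2 - 1 = m + 1 by omega, Nat.add_sub_cancel,
      ← indepPolyOn_firstSegments le_rfl, ← indepPolyOn_firstSegments (Nat.le_succ _),
      ← indepPolyOn_firstSegments (Nat.le_add_right m 2),
      indepPolyOn_firstSegments_succ (Nat.lt_succ_self _),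
      indepPolyOn_firstSegmentsErase_succ (Nat.lt_succ_self _),
      indepPolyOn_firstSegmentsErase_succ (by omega : m < m + 2)]
    ring
end

section
/- For every n ≥ 1, all complex roots of the independence polynomial I(W_n,x) of the n-centipede are real (and negative). -/
open Polynomial

/-!
Grouping the independent sets of the corona `G ∘ K₁` by their trace on `G` gives
`I(G ∘ K₁, x) = (1 + x) ^ |V| * I(G, x / (1 + x))`, and the centipede is the corona of the path.
The path polynomials satisfy `p (n + 2) = p (n + 1) + x * p n`; writing `s ^ 2 = 1 + 4 w` and
`α, β = (1 ± s) / 2`, this gives `s * p n (w) = α ^ (n + 2) - β ^ (n + 2)`. At a root `w` of `p n`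
we get `‖1 + s‖ = ‖1 - s‖`, so `s` is purely imaginary and `w = (s ^ 2 - 1) / 4` is real and
negative; hence so is the corresponding root `z = w / (1 - w)` of the centipede polynomial.
-/

open Finset SimpleGraph

variable {V : Type*}

namespace SimpleGraph

/-- The corona `G ∘ K₁`: `(v, true)` is the pendant vertex attached to `(v, false)`. -/
def corona (G : SimpleGraph V) : SimpleGraph (V × Bool) where
  Adj a b := (a.2 = false ∧ b.2 = false ∧ G.Adj a.1 b.1) ∨ (a.1 = b.1 ∧ a.2 ≠ b.2)
  symm := ⟨fun a b h => by
    rcases h with ⟨ha, hb, h⟩ | ⟨h, hne⟩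
    · exact Or.inl ⟨hb, ha, h.symm⟩
    · exact Or.inr ⟨h.symm, hne.symm⟩⟩
  loopless := ⟨fun a h => by
    rcases h with ⟨-, -, h⟩ | ⟨-, h⟩
    · exact G.irrefl h
    · exact h rfl⟩

theorem corona_independent_iff (G : SimpleGraph V) (s : Finset (V × Bool)) :
    (∀ a ∈ s, ∀ b ∈ s, ¬G.corona.Adj a b) ↔
      (∀ u, (u, false) ∈ s → ∀ v, (v, false) ∈ s → ¬G.Adj u v) ∧
        ∀ v, (v, false) ∈ s → (v, true) ∉ s := by
  constructor
  · intro h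
    exact ⟨fun u hu v hv hadj => h _ hu _ hv (Or.inl ⟨rfl, rfl, hadj⟩),
      fun v hf ht => h _ hf _ ht (Or.inr ⟨rfl, by simp⟩)⟩
  · rintro ⟨hG, hpend⟩ ⟨u, a⟩ hu ⟨v, b⟩ hv (⟨rfl, rfl, hadj⟩ | ⟨rfl, hne⟩)
    · exact hG u hu v hv hadj
    · cases a <;> cases b <;> simp_all

end SimpleGraph

theorem centipede_eq_corona_pathGraph (n : ℕ) : centipede n = (pathGraph n).corona := by
  ext ⟨i, a⟩ ⟨j, b⟩
  cases a <;> cases b <;> simp [centipede, corona, pathGraph_adj, Fin.ext_iff] <;> omega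

theorem indepPoly_eq_sum_filter [Fintype V] (G : SimpleGraph V) [DecidableRel G.Adj] :
    indepPoly G = ∑ s ∈ univ.filter (fun s : Finset V => ∀ u ∈ s, ∀ v ∈ s, ¬G.Adj u v), X ^ #s := by
  rw [indepPoly]
  convert rfl

theorem sum_disjoint_pow_card [Fintype V] [DecidableEq V] {R : Type*} [CommSemiring R]
    (A : Finset V) (x : R) :
    ∑ B : Finset V, (if Disjoint A B then x ^ #B else 0) = (1 + x) ^ #Aᶜ := by
  have : ({B | Disjoint A B} : Finset (Finset V)) = Aᶜ.powerset := by
    ext B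
    simp [subset_compl_iff_disjoint_left]
  rw [← sum_filter, this, add_comm, ← sum_pow_mul_eq_add_pow]
  simp only [one_pow, mul_one]

theorem indepPoly_corona [Fintype V] [DecidableEq V] (G : SimpleGraph V) [DecidableRel G.Adj] :
    indepPoly G.corona =
      ∑ A : Finset V, if ∀ u ∈ A, ∀ v ∈ A, ¬G.Adj u v then X ^ #A * (1 + X) ^ #Aᶜ else 0 := by
  classical
  let e : Finset (V × Bool) ≃ Finset V × Finset V :=
    (Equiv.finsetCongr ((Equiv.prodComm V Bool).trans (Equiv.boolProdEquivSum V))).trans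
      Finset.sumEquiv.toEquiv
  have mem_e_symm (A B : Finset V) (v : V) (b : Bool) :
      (v, b) ∈ e.symm (A, B) ↔ v ∈ (if b then B else A) := by
    cases b <;> simp [e]
  have card_e_symm (A B : Finset V) : #(e.symm (A, B)) = #A + #B := by simp [e]
  rw [indepPoly_eq_sum_filter, sum_filter, ← e.symm.sum_comp, Fintype.sum_prod_type]
  refine sum_congr rfl fun A _ => ?_
  simp only [corona_independent_iff]
  simp only [mem_e_symm, card_e_symm, if_false, if_true, Bool.false_eq_true, ← Finset.disjoint_left,
    ite_and]
  split_ifs with hA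
  · rw [← sum_disjoint_pow_card, mul_sum]
    refine sum_congr rfl fun B _ => ?_
    split_ifs <;> simp [pow_add]
  · simp

theorem aeval_indepPoly_corona [Fintype V] (G : SimpleGraph V) {K : Type*} [Field K]
    [Algebra ℝ K] {z : K} (hz : 1 + z ≠ 0) :
    aeval z (indepPoly G.corona) =
      (1 + z) ^ Fintype.card V * aeval (z / (1 + z)) (indepPoly G) := by
  classical
  rw [indepPoly_corona, indepPoly_eq_sum_filter, sum_filter, map_sum, map_sum, mul_sum]
  refine sum_congr rfl fun A _ => ?_
  split_ifs
  · rw [← card_add_card_compl A]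
    simp only [map_mul, map_pow, map_add, map_one, aeval_X, div_pow, pow_add]
    field_simp
  · simp

/-- Independent sets of `pathGraph n`, as subsets of `range n`, so that all path lengths share
one vertex type. -/
def pathIndep (n : ℕ) : Finset (Finset ℕ) :=
  (range n).powerset.filter fun A => ∀ i ∈ A, i + 1 ∉ A

theorem mem_pathIndep {n : ℕ} {A : Finset ℕ} :
    A ∈ pathIndep n ↔ (∀ i ∈ A, i < n) ∧ ∀ i ∈ A, i + 1 ∉ A := by
  simp [pathIndep, subset_iff]

theorem notMem_of_mem_pathIndep {n m : ℕ} {A : Finset ℕ} (hA : A ∈ pathIndep n) (hm : n ≤ m) :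
    m ∉ A :=
  fun h => by grind [mem_pathIndep]

theorem filter_notMem_pathIndep (n : ℕ) :
    (pathIndep (n + 2)).filter (n + 1 ∉ ·) = pathIndep (n + 1) := by
  ext A
  simp only [mem_filter, mem_pathIndep]
  grind

theorem filter_mem_pathIndep (n : ℕ) :
    (pathIndep (n + 2)).filter (n + 1 ∈ ·) = (pathIndep n).image (insert (n + 1)) := by
  ext A
  simp only [mem_filter, mem_pathIndep, mem_image]
  constructor
  · rintro ⟨⟨hlt, hA⟩, hn⟩
    exact ⟨A.erase (n + 1), ⟨by grind, by grind⟩, insert_erase hn⟩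
  · rintro ⟨B, ⟨hlt, hB⟩, rfl⟩
    grind

theorem sum_pathIndep_add_two {R : Type*} [CommSemiring R] (x : R) (n : ℕ) :
    ∑ A ∈ pathIndep (n + 2), x ^ #A =
      ∑ A ∈ pathIndep (n + 1), x ^ #A + x * ∑ A ∈ pathIndep n, x ^ #A := by
  rw [← sum_filter_not_add_sum_filter _ (n + 1 ∈ ·), filter_notMem_pathIndep,
    filter_mem_pathIndep, sum_image, mul_sum]
  · refine congrArg _ (sum_congr rfl fun A hA => ?_)
    rw [card_insert_of_notMem (notMem_of_mem_pathIndep hA n.le_succ)]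
    ring
  · intro A hA B hB h
    rw [← erase_insert (notMem_of_mem_pathIndep hA n.le_succ),
      ← erase_insert (notMem_of_mem_pathIndep hB n.le_succ)]
    exact congrArg (Finset.erase · (n + 1)) h

theorem map_valEmbedding_mem_pathIndep {n : ℕ} (B : Finset (Fin n)) :
    B.map Fin.valEmbedding ∈ pathIndep n ↔ ∀ u ∈ B, ∀ v ∈ B, ¬(pathGraph n).Adj u v := by
  simp only [mem_pathIndep, mem_map, Fin.valEmbedding_apply, pathGraph_adj,
    forall_exists_index, and_imp, forall_apply_eq_imp_iff₂]
  constructor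
  · rintro ⟨-, h⟩ u hu v hv (huv | hvu)
    · exact h u hu ⟨v, hv, huv.symm⟩
    · exact h v hv ⟨u, hu, hvu.symm⟩
  · exact fun h => ⟨fun a _ => a.isLt, fun a ha ⟨b, hb, hab⟩ => h a ha b hb (Or.inl hab.symm)⟩

theorem indepPoly_pathGraph (n : ℕ) : indepPoly (pathGraph n) = ∑ A ∈ pathIndep n, X ^ #A := by
  classical
  rw [indepPoly_eq_sum_filter]
  refine sum_bij (fun B _ => B.map Fin.valEmbedding) (fun B hB => ?_)
    (fun B _ C _ h => map_injective _ h) (fun A hA => ?_) (fun B _ => by rw [card_map])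
  · simpa [map_valEmbedding_mem_pathIndep] using hB
  · refine ⟨A.attachFin fun m hm => (mem_pathIndep.1 hA).1 m hm, ?_, map_valEmbedding_attachFin _⟩
    simpa only [mem_filter, mem_univ, true_and, ← map_valEmbedding_mem_pathIndep,
      map_valEmbedding_attachFin] using hA

theorem indepPoly_pathGraph_zero : indepPoly (pathGraph 0) = 1 := by
  rw [indepPoly_pathGraph, show pathIndep 0 = {∅} by decide, sum_singleton, card_empty, pow_zero]

theorem indepPoly_pathGraph_one : indepPoly (pathGraph 1) = 1 + X := by
  rw [indepPoly_pathGraph, show pathIndep 1 = {∅, {0}} by decide, sum_pair (by decide)]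
  simp

theorem indepPoly_pathGraph_add_two (n : ℕ) :
    indepPoly (pathGraph (n + 2)) = indepPoly (pathGraph (n + 1)) + X * indepPoly (pathGraph n) := by
  simp only [indepPoly_pathGraph, sum_pathIndep_add_two]

theorem sub_mul_aeval_indepPoly_pathGraph {A : Type*} [CommRing A] [Algebra ℝ A] {w α β : A}
    (hsum : α + β = 1) (hprod : α * β = -w) (n : ℕ) :
    (α - β) * aeval w (indepPoly (pathGraph n)) = α ^ (n + 2) - β ^ (n + 2) := by
  induction n using Nat.twoStepInduction with
  | zero =>
    rw [indepPoly_pathGraph_zero, map_one]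
    linear_combination (β - α) * hsum
  | one =>
    rw [indepPoly_pathGraph_one, map_add, map_one, aeval_X]
    linear_combination (β - α) * (1 + α + β) * hsum + (α - β) * hprod
  | more n ih₀ ih₁ =>
    rw [indepPoly_pathGraph_add_two, map_add, map_mul, aeval_X]
    linear_combination ih₁ + w * ih₀ - (α ^ (n + 3) - β ^ (n + 3)) * hsum
      + (α ^ (n + 2) - β ^ (n + 2)) * hprod

theorem Complex.re_eq_zero_of_norm_one_add_eq {s : ℂ} (h : ‖1 + s‖ = ‖1 - s‖) : s.re = 0 := by
  have := congrArg (· ^ 2) h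
  simp only [Complex.sq_norm, Complex.normSq_apply, Complex.add_re, Complex.add_im,
    Complex.sub_re, Complex.sub_im, Complex.one_re, Complex.one_im] at this
  linarith

theorem exists_neg_eq_of_aeval_indepPoly_pathGraph_eq_zero {n : ℕ} {w : ℂ}
    (h : aeval w (indepPoly (pathGraph n)) = 0) : ∃ r : ℝ, r < 0 ∧ w = r := by
  obtain ⟨s, hs⟩ := IsAlgClosed.exists_pow_nat_eq (1 + 4 * w) two_pos
  have hclosed := sub_mul_aeval_indepPoly_pathGraph (w := w) (α := (1 + s) / 2)
    (β := (1 - s) / 2) (by ring) (by linear_combination (-1 / 4 : ℂ) * hs) n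
  rw [h, mul_zero, eq_comm, sub_eq_zero] at hclosed
  have hnorm : ‖1 + s‖ = ‖1 - s‖ := by
    have := congrArg (‖·‖) hclosed
    rwa [norm_pow, norm_pow, pow_left_inj₀ (norm_nonneg _) (norm_nonneg _) (n + 1).succ_ne_zero,
      norm_div, norm_div, div_left_inj' (by simp)] at this
  have hs_eq : s = s.im * Complex.I :=
    Complex.ext (by simp [Complex.re_eq_zero_of_norm_one_add_eq hnorm]) (by simp)
  refine ⟨-(1 + s.im ^ 2) / 4, by nlinarith [sq_nonneg s.im], ?_⟩
  rw [hs_eq] at hs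
  push_cast
  linear_combination (-1 / 4 : ℂ) * hs + ((s.im : ℂ) ^ 2 / 4) * Complex.I_sq

theorem centipede_real_rooted_general (n : ℕ) (z : ℂ)
    (hz : ((indepPoly (centipede n)).map (algebraMap ℝ ℂ)).IsRoot z) :
    z.im = 0 ∧ z.re < 0 := by
  rw [IsRoot, eval_map_algebraMap, centipede_eq_corona_pathGraph] at hz
  by_cases hz1 : 1 + z = 0
  · rw [eq_neg_of_add_eq_zero_right hz1]
    norm_num
  rw [aeval_indepPoly_corona _ hz1, mul_eq_zero, or_iff_right (pow_ne_zero _ hz1)] at hz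
  obtain ⟨r, hr, hw⟩ := exists_neg_eq_of_aeval_indepPoly_pathGraph_eq_zero hz
  have hz_eq : z = ((r / (1 - r) : ℝ) : ℂ) := by
    have h1r : (1 - r : ℂ) ≠ 0 := by exact_mod_cast (by linarith : 1 - r ≠ 0)
    rw [div_eq_iff hz1] at hw
    push_cast
    rw [eq_div_iff h1r]
    linear_combination hw
  rw [hz_eq, Complex.ofReal_im, Complex.ofReal_re]
  exact ⟨rfl, div_neg_of_neg_of_pos hr (by linarith)⟩

theorem centipede_real_rooted (n : ℕ) (hn : 1 ≤ n) (z : ℂ)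
    (hz : ((indepPoly (centipede n)).map (algebraMap ℝ ℂ)).IsRoot z) :
    z.im = 0 ∧ z.re < 0 :=
  centipede_real_rooted_general n z hz
end

section
/- The independence polynomials of the caterpillars satisfy the recurrence I(H_n,x) = (1+x)^2·I(H_{n-1},x) + x(1+x)^2·I(H_{n-2},x) for n ≥ 2, with I(H_0,x)=1 and I(H_1,x)=(1+x)^2+x. -/
open Polynomial

/-- The `n`-caterpillar: a path on `n` vertices `(i, 0)` with two pendant vertices
`(i, 1)` and `(i, 2)` attached to each path vertex. -/
def caterpillar (n : ℕ) : SimpleGraph (Fin n × Fin 3) :=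
  SimpleGraph.fromRel (fun a b =>
    (a.2 = 0 ∧ b.2 = 0 ∧ (a.1 : ℕ) + 1 = (b.1 : ℕ)) ∨
    (a.1 = b.1 ∧ a.2 = 0 ∧ b.2 ≠ 0))

section Aux

open Finset

def catEquiv (m : ℕ) : (Fin m × Fin 3) ⊕ Fin 3 ≃ Fin (m+1) × Fin 3 where
  toFun := Sum.elim (fun p => (p.1.castSucc, p.2)) (fun b => (Fin.last m, b))
  invFun := fun q => if h : (q.1 : ℕ) < m then Sum.inl (⟨q.1, h⟩, q.2) else Sum.inr q.2
  left_inv := by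
    rintro (⟨i, a⟩ | b)
    · simp [i.isLt]
    · simp
  right_inv := by
    rintro ⟨i, a⟩
    by_cases h : (i : ℕ) < m
    · simp only [h, dif_pos]
      simp [Fin.ext_iff]
    · simp only [h, dif_neg, not_false_iff]
      have : i = Fin.last m := by
        have := i.isLt; apply Fin.ext; simp; omega
      simp [this]

def finsetSumEquiv {α β : Type*} : Finset (α ⊕ β) ≃ Finset α × Finset β where
  toFun u := (u.toLeft, u.toRight)
  invFun p := p.1.disjSum p.2
  left_inv u := Finset.toLeft_disjSum_toRight
  right_inv p := by simp

lemma adj_ll {m : ℕ} (p q : Fin m × Fin 3) :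
    (caterpillar (m+1)).Adj (p.1.castSucc, p.2) (q.1.castSucc, q.2) ↔
      (caterpillar m).Adj p q := by
  obtain ⟨i, a⟩ := p; obtain ⟨j, b⟩ := q
  simp only [caterpillar, SimpleGraph.fromRel_adj, ne_eq, Prod.mk.injEq, Prod.ext_iff,
    Fin.castSucc_inj, Fin.coe_castSucc]

lemma adj_lr {m : ℕ} (p : Fin m × Fin 3) (b : Fin 3) :
    (caterpillar (m+1)).Adj (p.1.castSucc, p.2) (Fin.last m, b) ↔
      (p.2 = 0 ∧ b = 0 ∧ (p.1 : ℕ) + 1 = m) := by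
  obtain ⟨i, a⟩ := p
  have h1 : i.castSucc ≠ Fin.last m := by
    simp [Fin.ext_iff]; omega
  have h2 : ((Fin.last m : Fin (m+1)) : ℕ) = m := rfl
  simp only [caterpillar, SimpleGraph.fromRel_adj, ne_eq, Prod.mk.injEq, Fin.coe_castSucc, h2]
  constructor
  · rintro ⟨-, (⟨ha, hb, hi⟩ | ⟨h, -⟩) | (⟨hb, ha, hi⟩ | ⟨h, -⟩)⟩
    · exact ⟨ha, hb, hi⟩
    · exact absurd h h1
    · omega
    · exact absurd h.symm h1
  · rintro ⟨ha, hb, hi⟩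
    exact ⟨by simp [h1], Or.inl (Or.inl ⟨ha, hb, hi⟩)⟩

lemma adj_rr {m : ℕ} (a b : Fin 3) :
    (caterpillar (m+1)).Adj (Fin.last m, a) (Fin.last m, b) ↔
      ((a = 0 ∧ b ≠ 0) ∨ (b = 0 ∧ a ≠ 0)) := by
  have hm : ¬((Fin.last m : ℕ) + 1 = (Fin.last m : ℕ)) := by omega
  simp only [caterpillar, SimpleGraph.fromRel_adj, ne_eq, Prod.mk.injEq, true_and, hm,
    false_and, and_false, false_or]
  constructor
  · rintro ⟨hab, h⟩; tauto
  · intro h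
    refine ⟨?_, by tauto⟩
    rintro rfl; tauto

lemma adj_rl {m : ℕ} (p : Fin m × Fin 3) (b : Fin 3) :
    (caterpillar (m+1)).Adj (Fin.last m, b) (p.1.castSucc, p.2) ↔
      (p.2 = 0 ∧ b = 0 ∧ (p.1 : ℕ) + 1 = m) := by
  rw [SimpleGraph.adj_comm, adj_lr]

@[simp] lemma catEquiv_inl {m : ℕ} (p : Fin m × Fin 3) :
    catEquiv m (Sum.inl p) = (p.1.castSucc, p.2) := rfl

@[simp] lemma catEquiv_inr {m : ℕ} (b : Fin 3) :
    catEquiv m (Sum.inr b) = (Fin.last m, b) := rfl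

lemma forall_disjSum {α β : Type*} {A : Finset α} {B : Finset β} {p : α ⊕ β → Prop} :
    (∀ x ∈ A.disjSum B, p x) ↔ (∀ a ∈ A, p (Sum.inl a)) ∧ (∀ b ∈ B, p (Sum.inr b)) := by
  constructor
  · exact fun h => ⟨fun a ha => h _ (Finset.inl_mem_disjSum.2 ha),
      fun b hb => h _ (Finset.inr_mem_disjSum.2 hb)⟩
  · rintro ⟨h1, h2⟩ (a | b) hx
    · exact h1 a (Finset.inl_mem_disjSum.1 hx)
    · exact h2 b (Finset.inr_mem_disjSum.1 hx)

def psi (m : ℕ) (A : Finset (Fin m × Fin 3)) (B : Finset (Fin 3)) :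
    Finset (Fin (m+1) × Fin 3) := (A.disjSum B).map (catEquiv m).toEmbedding

lemma card_psi (m : ℕ) (A : Finset (Fin m × Fin 3)) (B : Finset (Fin 3)) :
    (psi m A B).card = A.card + B.card := by
  rw [psi, Finset.card_map, Finset.card_disjSum]

lemma indep_psi (m : ℕ) (A : Finset (Fin m × Fin 3)) (B : Finset (Fin 3)) :
    (∀ u ∈ psi m A B, ∀ v ∈ psi m A B, ¬(caterpillar (m+1)).Adj u v) ↔
      ((∀ u ∈ A, ∀ v ∈ A, ¬(caterpillar m).Adj u v) ∧
       (∀ b ∈ B, ∀ b' ∈ B, ¬((b = (0 : Fin 3) ∧ b' ≠ 0) ∨ (b' = 0 ∧ b ≠ 0))) ∧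
       ((0 : Fin 3) ∈ B → ∀ p ∈ A, ¬(p.2 = 0 ∧ (p.1 : ℕ) + 1 = m))) := by
  simp only [psi, Finset.forall_mem_map, forall_disjSum, Equiv.coe_toEmbedding,
    catEquiv_inl, catEquiv_inr, adj_ll, adj_lr, adj_rl, adj_rr]
  constructor
  · rintro ⟨h1, h2⟩
    exact ⟨fun a ha a' ha' => (h1 a ha).1 a' ha', fun b hb b' hb' => (h2 b hb).2 b' hb',
      fun h0 p hp hc => (h1 p hp).2 0 h0 ⟨hc.1, rfl, hc.2⟩⟩
  · rintro ⟨h1, h2, h3⟩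
    exact ⟨fun a ha => ⟨h1 a ha, fun b hb hc => h3 (hc.2.1 ▸ hb) a ha ⟨hc.1, hc.2.2⟩⟩,
      fun b hb => ⟨fun a ha hc => h3 (hc.2.1 ▸ hb) a ha ⟨hc.1, hc.2.2⟩, h2 b hb⟩⟩

lemma noLast_psi (m : ℕ) (A : Finset (Fin m × Fin 3)) (B : Finset (Fin 3)) :
    (∀ q ∈ psi m A B, ¬(q.2 = 0 ∧ (q.1 : ℕ) + 1 = m + 1)) ↔ (0 : Fin 3) ∉ B := by
  simp only [psi, Finset.forall_mem_map, forall_disjSum, Equiv.coe_toEmbedding,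
    catEquiv_inl, catEquiv_inr]
  constructor
  · intro h hB
    exact h.2 0 hB ⟨rfl, rfl⟩
  · intro hB
    refine ⟨fun a ha hc => ?_, fun b hb hc => ?_⟩
    · have := a.1.isLt; simp only [Fin.coe_castSucc] at hc; omega
    · exact hB (hc.1 ▸ hb)

lemma univ_finset_fin3 : (Finset.univ : Finset (Finset (Fin 3))) =
    {∅, {0}, {1}, {2}, {0,1}, {0,2}, {1,2}, {0,1,2}} := by decide

lemma sumB (c : Prop) [Decidable c] :
    (∑ B : Finset (Fin 3), if ((∀ b ∈ B, ∀ b' ∈ B, ¬((b = (0 : Fin 3) ∧ b' ≠ 0) ∨ (b' = 0 ∧ b ≠ 0)))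
        ∧ ((0 : Fin 3) ∈ B → c)) then (X : Polynomial ℝ) ^ B.card else 0)
      = (1 + X) ^ 2 + if c then X else 0 := by
  rw [univ_finset_fin3]
  rw [Finset.sum_insert (by decide), Finset.sum_insert (by decide),
    Finset.sum_insert (by decide), Finset.sum_insert (by decide),
    Finset.sum_insert (by decide), Finset.sum_insert (by decide),
    Finset.sum_insert (by decide), Finset.sum_singleton]
  by_cases hc : c <;>
    · simp only [hc, implies_true, and_true, imp_false, if_true, if_false]
      simp (config := { decide := true }) only [Finset.card_insert_of_notMem,
        Finset.card_singleton, Finset.card_empty]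
      norm_num [show ({1, 2} : Finset (Fin 3)).card = 2 from by decide]
      ring

open Classical in
lemma indepPoly_eq (m : ℕ) :
    indepPoly (caterpillar m) = ∑ S : Finset (Fin m × Fin 3),
      if (∀ u ∈ S, ∀ v ∈ S, ¬(caterpillar m).Adj u v) then (X : Polynomial ℝ) ^ S.card else 0 := by
  rw [indepPoly, Finset.sum_filter]
  have h : (Fintype.ofFinite (Fin m × Fin 3)) = instFintypeProd (Fin m) (Fin 3) :=
    Subsingleton.elim _ _
  rw [h]
  exact Finset.sum_congr rfl fun S _ => by by_cases hS : ∀ u ∈ S, ∀ v ∈ S, ¬(caterpillar m).Adj u v <;> simp [hS]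

open Classical in
noncomputable def Qc (m : ℕ) : Polynomial ℝ :=
  ∑ S : Finset (Fin m × Fin 3),
    if ((∀ u ∈ S, ∀ v ∈ S, ¬(caterpillar m).Adj u v) ∧
        ∀ p ∈ S, ¬(p.2 = 0 ∧ (p.1 : ℕ) + 1 = m)) then (X : Polynomial ℝ) ^ S.card else 0

end Aux

section Steps
open Finset

open Classical in
lemma step1 (m : ℕ) :
    indepPoly (caterpillar (m+1)) = (1 + X) ^ 2 * indepPoly (caterpillar m) + X * Qc m := by
  classical
  set φ : (Finset (Fin m × Fin 3) × Finset (Fin 3)) ≃ Finset (Fin (m+1) × Fin 3) :=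
    finsetSumEquiv.symm.trans (catEquiv m).finsetCongr with hφ
  have hmain : (∑ S : Finset (Fin (m+1) × Fin 3),
        if (∀ u ∈ S, ∀ v ∈ S, ¬(caterpillar (m+1)).Adj u v) then (X : Polynomial ℝ) ^ S.card else 0)
      = ∑ AB : Finset (Fin m × Fin 3) × Finset (Fin 3),
          if ((∀ u ∈ AB.1, ∀ v ∈ AB.1, ¬(caterpillar m).Adj u v) ∧
              (∀ b ∈ AB.2, ∀ b' ∈ AB.2, ¬((b = (0 : Fin 3) ∧ b' ≠ 0) ∨ (b' = 0 ∧ b ≠ 0))) ∧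
              ((0 : Fin 3) ∈ AB.2 → ∀ p ∈ AB.1, ¬(p.2 = 0 ∧ (p.1 : ℕ) + 1 = m)))
          then (X : Polynomial ℝ) ^ AB.1.card * X ^ AB.2.card else 0 := by
    refine (Fintype.sum_equiv φ _ _ fun AB => ?_).symm
    obtain ⟨A, B⟩ := AB
    have hab : φ (A, B) = psi m A B := rfl
    rw [hab, card_psi, pow_add]
    exact if_congr (indep_psi m A B).symm rfl rfl
  rw [indepPoly_eq (m+1), hmain, Fintype.sum_prod_type, indepPoly_eq m, Qc]
  have key : ∀ A : Finset (Fin m × Fin 3),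
      (∑ B : Finset (Fin 3),
        if ((∀ u ∈ A, ∀ v ∈ A, ¬(caterpillar m).Adj u v) ∧
            (∀ b ∈ B, ∀ b' ∈ B, ¬((b = (0 : Fin 3) ∧ b' ≠ 0) ∨ (b' = 0 ∧ b ≠ 0))) ∧
            ((0 : Fin 3) ∈ B → ∀ p ∈ A, ¬(p.2 = 0 ∧ (p.1 : ℕ) + 1 = m)))
        then (X : Polynomial ℝ) ^ A.card * X ^ B.card else 0)
      = (1 + X) ^ 2 * (if (∀ u ∈ A, ∀ v ∈ A, ¬(caterpillar m).Adj u v) then X ^ A.card else 0)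
        + X * (if ((∀ u ∈ A, ∀ v ∈ A, ¬(caterpillar m).Adj u v) ∧
            ∀ p ∈ A, ¬(p.2 = 0 ∧ (p.1 : ℕ) + 1 = m)) then X ^ A.card else 0) := by
    intro A
    by_cases hA : (∀ u ∈ A, ∀ v ∈ A, ¬(caterpillar m).Adj u v)
    · rw [if_pos hA]
      have e2 : ∀ B : Finset (Fin 3), (if ((∀ u ∈ A, ∀ v ∈ A, ¬(caterpillar m).Adj u v) ∧
            (∀ b ∈ B, ∀ b' ∈ B, ¬((b = (0 : Fin 3) ∧ b' ≠ 0) ∨ (b' = 0 ∧ b ≠ 0))) ∧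
            ((0 : Fin 3) ∈ B → ∀ p ∈ A, ¬(p.2 = 0 ∧ (p.1 : ℕ) + 1 = m)))
          then (X : Polynomial ℝ) ^ A.card * X ^ B.card else 0)
          = (if ((∀ b ∈ B, ∀ b' ∈ B, ¬((b = (0 : Fin 3) ∧ b' ≠ 0) ∨ (b' = 0 ∧ b ≠ 0))) ∧
            ((0 : Fin 3) ∈ B → ∀ p ∈ A, ¬(p.2 = 0 ∧ (p.1 : ℕ) + 1 = m)))
            then (X : Polynomial ℝ) ^ A.card * X ^ B.card else 0) :=
        fun B => if_congr (and_iff_right hA) rfl rfl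
      rw [Finset.sum_congr rfl fun B _ => e2 B,
        if_congr (and_iff_right hA) rfl rfl]
      have h1 : (∑ B : Finset (Fin 3),
          if ((∀ b ∈ B, ∀ b' ∈ B, ¬((b = (0 : Fin 3) ∧ b' ≠ 0) ∨ (b' = 0 ∧ b ≠ 0))) ∧
              ((0 : Fin 3) ∈ B → ∀ p ∈ A, ¬(p.2 = 0 ∧ (p.1 : ℕ) + 1 = m)))
          then (X : Polynomial ℝ) ^ A.card * X ^ B.card else 0)
          = X ^ A.card * ∑ B : Finset (Fin 3),
            if ((∀ b ∈ B, ∀ b' ∈ B, ¬((b = (0 : Fin 3) ∧ b' ≠ 0) ∨ (b' = 0 ∧ b ≠ 0))) ∧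
              ((0 : Fin 3) ∈ B → ∀ p ∈ A, ¬(p.2 = 0 ∧ (p.1 : ℕ) + 1 = m)))
            then (X : Polynomial ℝ) ^ B.card else 0 := by
        rw [Finset.mul_sum]
        exact Finset.sum_congr rfl fun B _ => by rw [mul_ite, mul_zero]
      rw [h1, sumB (∀ p ∈ A, ¬(p.2 = 0 ∧ (p.1 : ℕ) + 1 = m))]
      by_cases hL : ∀ p ∈ A, ¬(p.2 = 0 ∧ (p.1 : ℕ) + 1 = m)
      · rw [if_pos hL, if_pos hL]; ring
      · rw [if_neg hL, if_neg hL]; ring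
    · have hz : ∀ B : Finset (Fin 3), (if ((∀ u ∈ A, ∀ v ∈ A, ¬(caterpillar m).Adj u v) ∧
            (∀ b ∈ B, ∀ b' ∈ B, ¬((b = (0 : Fin 3) ∧ b' ≠ 0) ∨ (b' = 0 ∧ b ≠ 0))) ∧
            ((0 : Fin 3) ∈ B → ∀ p ∈ A, ¬(p.2 = 0 ∧ (p.1 : ℕ) + 1 = m)))
          then (X : Polynomial ℝ) ^ A.card * X ^ B.card else 0) = 0 :=
        fun B => if_neg fun hc => hA hc.1
      rw [Finset.sum_congr rfl fun B _ => hz B, if_neg hA, if_neg fun hc => hA hc.1]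
      simp
  rw [Finset.sum_congr rfl fun A _ => key A, Finset.sum_add_distrib, ← Finset.mul_sum,
    ← Finset.mul_sum]

end Steps

open Classical in
lemma step2 (m : ℕ) : Qc (m+1) = (1 + X) ^ 2 * indepPoly (caterpillar m) := by
  classical
  set φ : (Finset (Fin m × Fin 3) × Finset (Fin 3)) ≃ Finset (Fin (m+1) × Fin 3) :=
    finsetSumEquiv.symm.trans (catEquiv m).finsetCongr with hφ
  have hmain : (∑ S : Finset (Fin (m+1) × Fin 3),
        if ((∀ u ∈ S, ∀ v ∈ S, ¬(caterpillar (m+1)).Adj u v) ∧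
            ∀ p ∈ S, ¬(p.2 = 0 ∧ (p.1 : ℕ) + 1 = m + 1)) then (X : Polynomial ℝ) ^ S.card else 0)
      = ∑ AB : Finset (Fin m × Fin 3) × Finset (Fin 3),
          if ((∀ u ∈ AB.1, ∀ v ∈ AB.1, ¬(caterpillar m).Adj u v) ∧
              (∀ b ∈ AB.2, ∀ b' ∈ AB.2, ¬((b = (0 : Fin 3) ∧ b' ≠ 0) ∨ (b' = 0 ∧ b ≠ 0))) ∧
              ((0 : Fin 3) ∈ AB.2 → False))
          then (X : Polynomial ℝ) ^ AB.1.card * X ^ AB.2.card else 0 := by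
    refine (Fintype.sum_equiv φ _ _ fun AB => ?_).symm
    obtain ⟨A, B⟩ := AB
    have hab : φ (A, B) = psi m A B := rfl
    rw [hab, card_psi, pow_add]
    refine if_congr ?_ rfl rfl
    constructor
    · rintro ⟨h1, h2, h3⟩
      exact ⟨(indep_psi m A B).2 ⟨h1, h2, fun h0 => absurd h0 h3⟩, (noLast_psi m A B).2 h3⟩
    · rintro ⟨hi, hn⟩
      have hB := (noLast_psi m A B).1 hn
      obtain ⟨h1, h2, -⟩ := (indep_psi m A B).1 hi
      exact ⟨h1, h2, fun h0 => absurd h0 hB⟩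
  rw [Qc, hmain, Fintype.sum_prod_type, indepPoly_eq m]
  have key : ∀ A : Finset (Fin m × Fin 3),
      (∑ B : Finset (Fin 3),
        if ((∀ u ∈ A, ∀ v ∈ A, ¬(caterpillar m).Adj u v) ∧
            (∀ b ∈ B, ∀ b' ∈ B, ¬((b = (0 : Fin 3) ∧ b' ≠ 0) ∨ (b' = 0 ∧ b ≠ 0))) ∧
            ((0 : Fin 3) ∈ B → False))
        then (X : Polynomial ℝ) ^ A.card * X ^ B.card else 0)
      = (1 + X) ^ 2 * (if (∀ u ∈ A, ∀ v ∈ A, ¬(caterpillar m).Adj u v) then X ^ A.card else 0) := by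
    intro A
    by_cases hA : (∀ u ∈ A, ∀ v ∈ A, ¬(caterpillar m).Adj u v)
    · rw [if_pos hA]
      have e2 : ∀ B : Finset (Fin 3), (if ((∀ u ∈ A, ∀ v ∈ A, ¬(caterpillar m).Adj u v) ∧
            (∀ b ∈ B, ∀ b' ∈ B, ¬((b = (0 : Fin 3) ∧ b' ≠ 0) ∨ (b' = 0 ∧ b ≠ 0))) ∧
            ((0 : Fin 3) ∈ B → False))
          then (X : Polynomial ℝ) ^ A.card * X ^ B.card else 0)
          = (if ((∀ b ∈ B, ∀ b' ∈ B, ¬((b = (0 : Fin 3) ∧ b' ≠ 0) ∨ (b' = 0 ∧ b ≠ 0))) ∧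
            ((0 : Fin 3) ∈ B → False))
            then (X : Polynomial ℝ) ^ A.card * X ^ B.card else 0) :=
        fun B => if_congr (and_iff_right hA) rfl rfl
      rw [Finset.sum_congr rfl fun B _ => e2 B]
      have h1 : (∑ B : Finset (Fin 3),
          if ((∀ b ∈ B, ∀ b' ∈ B, ¬((b = (0 : Fin 3) ∧ b' ≠ 0) ∨ (b' = 0 ∧ b ≠ 0))) ∧
              ((0 : Fin 3) ∈ B → False))
          then (X : Polynomial ℝ) ^ A.card * X ^ B.card else 0)
          = X ^ A.card * ∑ B : Finset (Fin 3),
            if ((∀ b ∈ B, ∀ b' ∈ B, ¬((b = (0 : Fin 3) ∧ b' ≠ 0) ∨ (b' = 0 ∧ b ≠ 0))) ∧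
              ((0 : Fin 3) ∈ B → False))
            then (X : Polynomial ℝ) ^ B.card else 0 := by
        rw [Finset.mul_sum]
        exact Finset.sum_congr rfl fun B _ => by rw [mul_ite, mul_zero]
      rw [h1, sumB False, if_neg (fun h => h)]
      ring
    · have hz : ∀ B : Finset (Fin 3), (if ((∀ u ∈ A, ∀ v ∈ A, ¬(caterpillar m).Adj u v) ∧
            (∀ b ∈ B, ∀ b' ∈ B, ¬((b = (0 : Fin 3) ∧ b' ≠ 0) ∨ (b' = 0 ∧ b ≠ 0))) ∧
            ((0 : Fin 3) ∈ B → False))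
          then (X : Polynomial ℝ) ^ A.card * X ^ B.card else 0) = 0 :=
        fun B => if_neg fun hc => hA hc.1
      rw [Finset.sum_congr rfl fun B _ => hz B, if_neg hA]
      simp
  rw [Finset.sum_congr rfl fun A _ => key A, ← Finset.mul_sum]

lemma univ_finset_empty : (Finset.univ : Finset (Finset (Fin 0 × Fin 3))) = {∅} :=
  Finset.eq_singleton_iff_unique_mem.2
    ⟨Finset.mem_univ _, fun S _ => Finset.eq_empty_of_isEmpty S⟩

lemma P0 : indepPoly (caterpillar 0) = 1 := by
  rw [indepPoly_eq 0, univ_finset_empty, Finset.sum_singleton]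
  simp

lemma Q0 : Qc 0 = 1 := by
  rw [Qc, univ_finset_empty, Finset.sum_singleton]
  simp

theorem caterpillar_recurrence :
    indepPoly (caterpillar 0) = 1 ∧ indepPoly (caterpillar 1) = (1 + X) ^ 2 + X ∧
    ∀ n : ℕ, 2 ≤ n →
      indepPoly (caterpillar n) =
        (1 + X) ^ 2 * indepPoly (caterpillar (n - 1)) +
          X * (1 + X) ^ 2 * indepPoly (caterpillar (n - 2)) := by
  refine ⟨P0, ?_, ?_⟩
  · have h := step1 0
    rw [P0, Q0] at h
    simpa using h
  · intro n hn
    obtain ⟨k, rfl⟩ : ∃ k, n = k + 2 := ⟨n - 2, by omega⟩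
    have h1 : k + 2 - 1 = k + 1 := by omega
    have h2 : k + 2 - 2 = k := by omega
    rw [h1, h2, show k + 2 = (k + 1) + 1 from rfl, step1 (k + 1), step2 k]
    ring
end

section
/- For every n ≥ 0, all complex roots of the independence polynomial I(F_n,x) of the n-th Fibonacci tree are real. -/
open Polynomial

/-- Vertex type of the `n`-th Fibonacci tree. -/
def FibV : ℕ → Type
  | 0 => Unit
  | 1 => Bool
  | (n + 2) => FibV (n + 1) ⊕ FibV n ⊕ Unit

instance fibVFinite : ∀ n, Finite (FibV n)
  | 0 => inferInstanceAs (Finite Unit)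
  | 1 => inferInstanceAs (Finite Bool)
  | (n + 2) =>
    haveI := fibVFinite (n + 1)
    haveI := fibVFinite n
    inferInstanceAs (Finite (FibV (n + 1) ⊕ FibV n ⊕ Unit))

/-- The root of the `n`-th Fibonacci tree. -/
def fibRoot : (n : ℕ) → FibV n
  | 0 => ()
  | 1 => true
  | (_ + 2) => Sum.inr (Sum.inr ())

/-- The `n`-th Fibonacci tree: `F₀ = K₁`, `F₁ = K₂`, and `Fₙ` is a new root joined to the
roots of disjoint copies of `Fₙ₋₁` and `Fₙ₋₂`. -/
def fibGraph : (n : ℕ) → SimpleGraph (FibV n)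
  | 0 => ⊥
  | 1 => ⊤
  | (n + 2) =>
    SimpleGraph.fromRel (fun a b =>
      match a, b with
      | Sum.inl a, Sum.inl b => (fibGraph (n + 1)).Adj a b
      | Sum.inr (Sum.inl a), Sum.inr (Sum.inl b) => (fibGraph n).Adj a b
      | Sum.inr (Sum.inr _), Sum.inl b => b = fibRoot (n + 1)
      | Sum.inr (Sum.inr _), Sum.inr (Sum.inl b) => b = fibRoot n
      | _, _ => False)

/-!
For `z` in the open upper half-plane let `fₙ = I(Fₙ, z) / I(Fₙ - rₙ, z)`. Sorting the independent
sets of `Fₙ₊₂` by whether they contain the root gives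
`I(Fₙ₊₂) = I(Fₙ₊₁) I(Fₙ) + x I(Fₙ₊₁ - rₙ₊₁) I(Fₙ - rₙ)` and `I(Fₙ₊₂ - rₙ₊₂) = I(Fₙ₊₁) I(Fₙ)`,
so `fₙ₊₂ = 1 + z / (fₙ fₙ₊₁)`. By induction `fₙ, fₙ₊₁` are nonzero with arguments in `[0, π]`
summing to less than `arg z`: then `w = z / (fₙ fₙ₊₁)` lies in the upper half-plane and
`0 < arg (1 + w) < arg w`, which propagates the invariant. In particular `I(Fₙ, z) ≠ 0`, and
conjugation excludes roots in the lower half-plane.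
-/

open Finset

lemma Finset.sum_finset_sum_type {α β M : Type*} [Fintype α] [Fintype β] [AddCommMonoid M]
    (f : Finset (α ⊕ β) → M) :
    ∑ s, f s = ∑ s₁ : Finset α, ∑ s₂ : Finset β, f (s₁.disjSum s₂) := by
  rw [← Fintype.sum_prod_type']
  exact (Fintype.sum_equiv sumEquiv.symm.toEquiv _ _ fun _ => rfl).symm

lemma Finset.sum_finset_unit {M : Type*} [AddCommMonoid M] (f : Finset Unit → M) :
    ∑ s, f s = f ∅ + f {()} := by
  rw [show (univ : Finset (Finset Unit)) = {∅, {()}} by decide, sum_pair (by decide)]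

lemma Finset.univ_finset_bool :
    (univ : Finset (Finset Bool)) = {∅, {false}, {true}, {false, true}} := by
  decide

namespace SimpleGraph

section IndepPoly

variable {V : Type*}

lemma isIndepSet_coe_iff (G : SimpleGraph V) (s : Finset V) :
    G.IsIndepSet (s : Set V) ↔ ∀ u ∈ s, ∀ v ∈ s, ¬G.Adj u v :=
  ⟨fun h _ hu _ hv huv => h hu hv huv.ne huv, fun h _ hu _ hv _ => h _ hu _ hv⟩

open Classical in
noncomputable def indepPolyWith [Finite V] (G : SimpleGraph V) (P : Finset V → Prop) : ℝ[X] :=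
  haveI := Fintype.ofFinite V
  ∑ s : Finset V, if G.IsIndepSet (s : Set V) ∧ P s then X ^ #s else 0

open Classical in
lemma indepPolyWith_eq_sum [Fintype V] (G : SimpleGraph V) (P : Finset V → Prop) :
    G.indepPolyWith P = ∑ s : Finset V, if G.IsIndepSet (s : Set V) ∧ P s then X ^ #s else 0 := by
  unfold indepPolyWith
  congr!

lemma indepPoly_eq_indepPolyWith [Finite V] (G : SimpleGraph V) :
    indepPoly G = G.indepPolyWith fun _ => True := by
  simp only [indepPoly, indepPolyWith, sum_filter]
  congr! with s
  rw [and_true, isIndepSet_coe_iff]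

end IndepPoly

section RootedJoin

variable {α β : Type*} (G₁ : SimpleGraph α) (G₂ : SimpleGraph β) (r₁ : α) (r₂ : β)

def rootedJoin : SimpleGraph (α ⊕ β ⊕ Unit) :=
  fromRel fun a b =>
    match a, b with
    | .inl a, .inl b => G₁.Adj a b
    | .inr (.inl a), .inr (.inl b) => G₂.Adj a b
    | .inr (.inr _), .inl b => b = r₁
    | .inr (.inr _), .inr (.inl b) => b = r₂
    | _, _ => False

lemma isIndepSet_rootedJoin_iff (s₁ : Finset α) (s₂ : Finset β) (u : Finset Unit) :
    (rootedJoin G₁ G₂ r₁ r₂).IsIndepSet ↑(s₁.disjSum (s₂.disjSum u)) ↔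
      G₁.IsIndepSet ↑s₁ ∧ G₂.IsIndepSet ↑s₂ ∧ (() ∈ u → r₁ ∉ s₁ ∧ r₂ ∉ s₂) := by
  simp only [IsIndepSet, Set.Pairwise, mem_coe, rootedJoin, fromRel_adj, Sum.forall,
    inl_mem_disjSum, inr_mem_disjSum, ne_eq, Sum.inl.injEq, Sum.inr.injEq, reduceCtorEq,
    not_false_eq_true, true_and, not_and, not_or, not_true_eq_false, imp_self, implies_true,
    and_true, forall_const]
  grind

variable [Finite α] [Finite β]

theorem indepPoly_rootedJoin :
    indepPoly (rootedJoin G₁ G₂ r₁ r₂) = indepPoly G₁ * indepPoly G₂ +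
      X * (G₁.indepPolyWith (r₁ ∉ ·) * G₂.indepPolyWith (r₂ ∉ ·)) := by
  have := Fintype.ofFinite α
  have := Fintype.ofFinite β
  classical
  simp only [indepPoly_eq_indepPolyWith, indepPolyWith_eq_sum, sum_finset_sum_type,
    sum_finset_unit, isIndepSet_rootedJoin_iff, card_disjSum]
  rw [sum_mul_sum, sum_mul_sum]
  simp only [mul_sum, ← sum_add_distrib]
  refine sum_congr rfl fun s₁ _ => sum_congr rfl fun s₂ _ => ?_
  by_cases h₁ : G₁.IsIndepSet ↑s₁ <;> by_cases h₂ : G₂.IsIndepSet ↑s₂ <;>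
    by_cases hr₁ : r₁ ∈ s₁ <;> by_cases hr₂ : r₂ ∈ s₂ <;>
    simp [h₁, h₂, hr₁, hr₂, pow_add, pow_succ, mul_comm, mul_left_comm]

theorem indepPolyWith_rootedJoin_root :
    (rootedJoin G₁ G₂ r₁ r₂).indepPolyWith (Sum.inr (Sum.inr ()) ∉ ·) =
      indepPoly G₁ * indepPoly G₂ := by
  have := Fintype.ofFinite α
  have := Fintype.ofFinite β
  classical
  simp only [indepPoly_eq_indepPolyWith, indepPolyWith_eq_sum, sum_finset_sum_type,
    sum_finset_unit, isIndepSet_rootedJoin_iff, card_disjSum, sum_mul_sum]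
  refine sum_congr rfl fun s₁ _ => sum_congr rfl fun s₂ _ => ?_
  by_cases h₁ : G₁.IsIndepSet ↑s₁ <;> by_cases h₂ : G₂.IsIndepSet ↑s₂ <;>
    simp [h₁, h₂, pow_add]

end RootedJoin

end SimpleGraph

open Real

namespace Complex

lemma arg_div_eq_sub {x y : ℂ} (hx : x ≠ 0) (hy : y ≠ 0)
    (h : arg x - arg y ∈ Set.Ioc (-π) π) : arg (x / y) = arg x - arg y := by
  rw [← arg_coe_angle_toReal_eq_arg, arg_div_coe_angle hx hy, ← Real.Angle.coe_sub,
    Real.Angle.toReal_coe_eq_self_iff_mem_Ioc.2 h]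

lemma im_pos_of_arg_mem_Ioo {z : ℂ} (h : arg z ∈ Set.Ioo 0 π) : 0 < z.im := by
  have hz : z ≠ 0 := by rintro rfl; simp at h
  rw [← norm_mul_sin_arg]
  exact mul_pos (norm_pos_iff.2 hz) (sin_pos_of_pos_of_lt_pi h.1 h.2)

lemma arg_mem_Ioo_of_im_pos {z : ℂ} (h : 0 < z.im) : arg z ∈ Set.Ioo 0 π :=
  ⟨(arg_nonneg_iff.2 h.le).lt_of_ne fun h0 => h.ne' (arg_eq_zero_iff.1 h0.symm).2,
    arg_lt_pi_iff.2 (.inr h.ne')⟩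

lemma arg_one_add_lt_arg {w : ℂ} (hw : 0 < w.im) : arg (1 + w) < arg w := by
  have hw1 : 0 < (1 + w).im := by simpa using hw
  have hw0 : w ≠ 0 := by rintro rfl; simp at hw
  have him : ((1 + w) / w).im < 0 := by
    rw [add_div, div_self hw0, add_im, one_im, add_zero, one_div, inv_im, neg_div]
    exact neg_neg_of_pos (div_pos hw (normSq_pos.2 hw0))
  obtain ⟨h0, hπ⟩ := arg_mem_Ioo_of_im_pos hw
  obtain ⟨h0', hπ'⟩ := arg_mem_Ioo_of_im_pos hw1
  rw [← sub_neg, ← arg_div_eq_sub (by rintro h; simp [h] at hw1) hw0 ⟨by linarith, by linarith⟩]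
  exact arg_neg_iff.2 him

end Complex

open Complex

section Sector

def SectorPair (z u v : ℂ) : Prop :=
  u ≠ 0 ∧ v ≠ 0 ∧ 0 ≤ arg u ∧ 0 ≤ arg v ∧ arg u + arg v < arg z

variable {z : ℂ}

lemma sectorPair_one_one (hz : 0 < z.im) : SectorPair z 1 1 := by
  simpa [SectorPair] using (arg_mem_Ioo_of_im_pos hz).1

lemma SectorPair.next (hz : 0 < z.im) {u v : ℂ} (h : SectorPair z u v) :
    SectorPair z v (1 + z / (u * v)) := by
  obtain ⟨hu, hv, hu₀, hv₀, hlt⟩ := h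
  obtain ⟨hz₀, hzπ⟩ := arg_mem_Ioo_of_im_pos hz
  have huv : arg (u * v) = arg u + arg v :=
    arg_mul hu hv ⟨by linarith [pi_pos], by linarith⟩
  have hw : arg (z / (u * v)) = arg z - (arg u + arg v) := by
    rw [← huv]
    exact arg_div_eq_sub (by rintro rfl; simp at hz) (mul_ne_zero hu hv) ⟨by linarith, by linarith⟩
  have hw_im : 0 < (z / (u * v)).im := im_pos_of_arg_mem_Ioo (by rw [hw]; constructor <;> linarith)
  have hw₁_im : 0 < (1 + z / (u * v)).im := by simpa using hw_im
  refine ⟨hv, by rintro h; simp [h] at hw₁_im, hv₀, arg_nonneg_iff.2 hw₁_im.le, ?_⟩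
  linarith [arg_one_add_lt_arg hw_im]

lemma sectorPair_of_recurrence (hz : 0 < z.im) {a b : ℕ → ℂ}
    (h₀ : SectorPair z (a 0 / b 0) (a 1 / b 1))
    (ha : ∀ n, a (n + 2) = a (n + 1) * a n + z * (b (n + 1) * b n))
    (hb : ∀ n, b (n + 2) = a (n + 1) * a n) (n : ℕ) :
    SectorPair z (a n / b n) (a (n + 1) / b (n + 1)) := by
  induction n with
  | zero => exact h₀
  | succ n ih =>
    obtain ⟨ha₀, hb₀⟩ := div_ne_zero_iff.1 ih.1
    obtain ⟨ha₁, hb₁⟩ := div_ne_zero_iff.1 ih.2.1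
    have hratio : a (n + 2) / b (n + 2) = 1 + z / (a n / b n * (a (n + 1) / b (n + 1))) := by
      rw [ha, hb]
      field_simp
    rw [hratio]
    exact ih.next hz

end Sector

open SimpleGraph

lemma fibGraph_add_two (n : ℕ) :
    fibGraph (n + 2) =
      rootedJoin (fibGraph (n + 1)) (fibGraph n) (fibRoot (n + 1)) (fibRoot n) := by
  show fromRel _ = fromRel _
  congr 1
  funext a b
  rcases a with a | a | a <;> rcases b with b | b | b <;> rfl

noncomputable def fibRootFreeIndepPoly (n : ℕ) : ℝ[X] := (fibGraph n).indepPolyWith (fibRoot n ∉ ·)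

lemma indepPoly_fibGraph_add_two (n : ℕ) :
    indepPoly (fibGraph (n + 2)) = indepPoly (fibGraph (n + 1)) * indepPoly (fibGraph n) +
      X * (fibRootFreeIndepPoly (n + 1) * fibRootFreeIndepPoly n) := by
  rw [fibGraph_add_two]
  exact indepPoly_rootedJoin ..

lemma fibRootFreeIndepPoly_add_two (n : ℕ) :
    fibRootFreeIndepPoly (n + 2) = indepPoly (fibGraph (n + 1)) * indepPoly (fibGraph n) := by
  rw [fibRootFreeIndepPoly, fibGraph_add_two]
  exact indepPolyWith_rootedJoin_root ..

lemma indepPoly_fibGraph_zero : indepPoly (fibGraph 0) = 1 + X := by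
  show indepPoly (⊥ : SimpleGraph Unit) = _
  classical
  rw [indepPoly_eq_indepPolyWith, indepPolyWith_eq_sum, sum_finset_unit]
  simp

lemma fibRootFreeIndepPoly_zero : fibRootFreeIndepPoly 0 = 1 := by
  show (⊥ : SimpleGraph Unit).indepPolyWith (() ∉ ·) = _
  classical
  rw [indepPolyWith_eq_sum, sum_finset_unit]
  simp

lemma indepPoly_fibGraph_one : indepPoly (fibGraph 1) = 1 + 2 * X := by
  show indepPoly (⊤ : SimpleGraph Bool) = _
  classical
  rw [indepPoly_eq_indepPolyWith, indepPolyWith_eq_sum, univ_finset_bool]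
  simp +decide [two_mul]

lemma fibRootFreeIndepPoly_one : fibRootFreeIndepPoly 1 = 1 + X := by
  show (⊤ : SimpleGraph Bool).indepPolyWith (true ∉ ·) = _
  classical
  rw [indepPolyWith_eq_sum, univ_finset_bool]
  simp +decide

theorem aeval_indepPoly_fibGraph_ne_zero {z : ℂ} (hz : 0 < z.im) (n : ℕ) :
    aeval z (indepPoly (fibGraph n)) ≠ 0 := by
  let a n := aeval z (indepPoly (fibGraph n))
  let b n := aeval z (fibRootFreeIndepPoly n)
  -- `F₀` and `F₁` arise from the recursion started at two empty trees, i.e. at the pair `(1, 1)`.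
  have h₀ : SectorPair z (a 0 / b 0) (a 1 / b 1) := by
    have h := ((sectorPair_one_one hz).next hz).next hz
    have hz₁ : 1 + z ≠ 0 := ne_of_apply_ne im (by simpa using hz.ne')
    convert h using 1
    · simp [a, b, indepPoly_fibGraph_zero, fibRootFreeIndepPoly_zero]
    · simp [a, b, indepPoly_fibGraph_one, fibRootFreeIndepPoly_one, map_ofNat]
      field_simp
      ring
  have h := sectorPair_of_recurrence hz h₀
    (fun n => by simp [a, b, indepPoly_fibGraph_add_two])
    (fun n => by simp [a, b, fibRootFreeIndepPoly_add_two]) n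
  exact (div_ne_zero_iff.1 h.1).1

theorem fibTree_real_rooted (n : ℕ) (z : ℂ)
    (hz : ((indepPoly (fibGraph n)).map (algebraMap ℝ ℂ)).IsRoot z) :
    z.im = 0 := by
  rw [IsRoot, eval_map_algebraMap] at hz
  by_contra him
  rcases lt_or_gt_of_ne him with hneg | hpos
  · apply aeval_indepPoly_fibGraph_ne_zero (z := starRingEnd ℂ z) (by simpa using hneg) n
    rw [aeval_conj, hz, map_zero]
  · exact aeval_indepPoly_fibGraph_ne_zero hpos n hz
end

section
/- Let G be a graph with a total order on its vertices and let u ∈ V(G). Then the stable-path tree T = T^<_{G,u} with root r = ū satisfies I(G-u,x)/I(G,x) = I(T-r,x)/I(T,x), i.e., I(G-u,x)·I(T,x) = I(G,x)·I(T-r,x). -/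
open Polynomial

/-- A stable path in `G` from `u` with respect to the linear order on the vertices: a
self-avoiding path `v₀ = u, v₁, …, v_k` of `G` such that whenever `vᵢ` is adjacent to a
later non-consecutive vertex `vⱼ` (`i + 1 < j`), we have `v_{i+1} < vⱼ`. -/
def IsStablePath {V : Type*} [LinearOrder V] (G : SimpleGraph V) (u : V) (l : List V) : Prop :=
  l ≠ [] ∧ l.head? = some u ∧ l.Nodup ∧ l.Chain' G.Adj ∧
    ∀ i j : Fin l.length, (h : (i : ℕ) + 1 < (j : ℕ)) → G.Adj (l.get i) (l.get j) →
      l.get ⟨(i : ℕ) + 1, lt_trans h j.isLt⟩ < l.get j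

/-- The stable-path tree `T^<_{G,u}`: its vertices are the stable paths of `G` starting
at `u`, and two paths are adjacent iff one is obtained from the other by appending one
more vertex. -/
def stablePathTree {V : Type*} [LinearOrder V] (G : SimpleGraph V) (u : V) :
    SimpleGraph {l : List V // IsStablePath G u l} :=
  SimpleGraph.fromRel (fun a b => ∃ x : V, (b : List V) = (a : List V) ++ [x])

instance stablePathTreeFinite {V : Type*} [Finite V] [LinearOrder V] (G : SimpleGraph V)
    (u : V) : Finite {l : List V // IsStablePath G u l} := by
  haveI := Fintype.ofFinite V
  have h : {l : List V | IsStablePath G u l} ⊆ {l : List V | l.length ≤ Fintype.card V} := by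
    intro l hl
    exact List.Nodup.length_le_card hl.2.2.1
  exact ((List.finite_length_le V (Fintype.card V)).subset h).to_subtype

/-- The root `ū` of the stable-path tree: the one-vertex path `[u]`. -/
def sptRoot {V : Type*} [LinearOrder V] (G : SimpleGraph V) (u : V) :
    {l : List V // IsStablePath G u l} :=
  ⟨[u], by
    refine ⟨by simp, by simp, by simp, by exact List.isChain_singleton _, ?_⟩
    intro i j h _
    have hj := j.isLt
    simp only [List.length_singleton] at hj
    omega⟩


/-!
Deleting `u` from `G` and the root `r` from `T` gives `I(G) = I(G - u) + x I(G - N[u])` and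
`I(T) = I(T - r) + x I(T - N[r])`, so it suffices to show
`I(G - u) I(T - N[r]) = I(G - N[u]) I(T - r)`. The forest `T - r` is the disjoint union of the
subtrees `T^i` rooted at the paths `[u, u_i]`, so `T - N[r]` is that of the `T^i - [u, u_i]`;
and `T^i` is the stable-path tree of `G^i` from `u_i`, where `G^i - u_i = G^{i+1}`, `G^1 = G - u`
and `G^{d+1} = G - N[u]`. Induction on the number of vertices gives
`I(G^{i+1}) I(T^i) = I(G^i) I(T^i - [u, u_i])` for every `i`, and these identities telescope.
-/

open Finset Function SimpleGraph

section IndepPoly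

variable {V W : Type*}

open Classical in
theorem indepPoly_eq_sum [Fintype V] (G : SimpleGraph V) :
    indepPoly G = ∑ s ∈ univ.filter (fun s : Finset V => G.IsIndepSet (s : Set V)),
      X ^ s.card := by
  rw [indepPoly]
  congr 1
  ext s
  simp only [mem_filter, mem_univ, true_and, isIndepSet_iff, Set.Pairwise, mem_coe]
  exact ⟨fun h a ha b hb _ => h a ha b hb, fun h a ha b hb => (eq_or_ne a b).elim
    (fun hab => hab ▸ G.loopless.irrefl a) (h ha hb)⟩

theorem SimpleGraph.isIndepSet_comap_iff (G : SimpleGraph V) {f : W → V} (hf : Injective f)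
    {s : Set W} : (G.comap f).IsIndepSet s ↔ G.IsIndepSet (f '' s) := by
  simp only [isIndepSet_iff, hf.injOn.pairwise_image]
  rfl

open Classical in
theorem indepPoly_comap_eq_sum [Fintype V] [Finite W] (G : SimpleGraph V) {f : W → V}
    (hf : Injective f) :
    indepPoly (G.comap f) = ∑ s ∈ univ.filter (fun s : Finset V =>
      G.IsIndepSet (s : Set V) ∧ (s : Set V) ⊆ Set.range f), X ^ s.card := by
  have := Fintype.ofFinite W
  rw [indepPoly_eq_sum]
  refine sum_nbij (fun s => s.map ⟨f, hf⟩) (fun s hs => ?_)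
    (fun s _ t _ h => Finset.map_injective _ h) (fun t ht => ?_) (fun s _ => by rw [card_map])
  · simp only [mem_filter, mem_univ, true_and, coe_map, Embedding.coeFn_mk] at hs ⊢
    exact ⟨(isIndepSet_comap_iff G hf).1 hs, Set.image_subset_range f s⟩
  · simp only [coe_filter, mem_univ, true_and, Set.mem_ofPred_eq] at ht
    obtain ⟨s, -, rfl⟩ := subset_map_iff.1 (show t ⊆ univ.map ⟨f, hf⟩ by
      intro v hv; simpa using ht.2 hv)
    refine ⟨s, ?_, rfl⟩
    simp only [coe_filter, mem_univ, true_and, Set.mem_ofPred_eq]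
    rw [isIndepSet_comap_iff G hf]
    simpa using ht.1

theorem indepPoly_comap_eq_of_range_eq [Finite V] [Finite W] {U : Type*} [Finite U]
    (G : SimpleGraph V) {f : W → V} {g : U → V} (hf : Injective f) (hg : Injective g)
    (h : Set.range f = Set.range g) : indepPoly (G.comap f) = indepPoly (G.comap g) := by
  have := Fintype.ofFinite V
  rw [indepPoly_comap_eq_sum G hf, indepPoly_comap_eq_sum G hg, h]

open Classical in
theorem indepPoly_induce_eq_sum [Fintype V] (G : SimpleGraph V) (s : Set V) :
    indepPoly (G.induce s) = ∑ t ∈ univ.filter (fun t : Finset V =>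
      G.IsIndepSet (t : Set V) ∧ (t : Set V) ⊆ s), X ^ t.card := by
  have h := indepPoly_comap_eq_sum (W := s) G Subtype.val_injective
  rwa [Subtype.range_coe] at h

-- `rw` cannot rewrite `s` inside `indepPoly (G.induce s)`: the `Finite` instance depends on `s`.
theorem indepPoly_induce_congr [Finite V] (G : SimpleGraph V) {s t : Set V} (h : s = t) :
    indepPoly (G.induce s) = indepPoly (G.induce t) := by
  subst h; rfl

theorem indepPoly_congr [Finite V] [Finite W] {G : SimpleGraph V} {H : SimpleGraph W}
    (e : G ≃g H) : indepPoly G = indepPoly H := by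
  have hG : G = H.comap e := by ext a b; exact e.map_adj_iff.symm
  rw [hG, indepPoly_comap_eq_of_range_eq H e.injective injective_id
    (by rw [e.surjective.range_eq, Set.range_id]), comap_id]

theorem indepPoly_induce_induce [Finite V] (G : SimpleGraph V) (s : Set V) (t : Set s) :
    indepPoly ((G.induce s).induce t) = indepPoly (G.induce (Subtype.val '' t)) :=
  indepPoly_comap_eq_of_range_eq (f := Subtype.val ∘ Subtype.val) G
    (Subtype.val_injective.comp Subtype.val_injective) Subtype.val_injective (by ext; simp)

theorem indepPoly_induce_preimage [Finite V] [Finite W] {G : SimpleGraph V}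
    {H : SimpleGraph W} (e : G ≃g H) (t : Set W) :
    indepPoly (G.induce (e ⁻¹' t)) = indepPoly (H.induce t) := by
  have hG : G.induce (e ⁻¹' t) = H.comap (e ∘ Subtype.val) := by
    ext a b; exact e.map_adj_iff.symm
  rw [hG]
  refine indepPoly_comap_eq_of_range_eq H (e.injective.comp Subtype.val_injective)
    Subtype.val_injective ?_
  rw [Set.range_comp, Subtype.range_coe, Set.image_preimage_eq t e.surjective]
  exact Subtype.range_coe.symm

theorem indepPoly_induce_union [Finite V] (G : SimpleGraph V) {s t : Set V}
    (hst : Disjoint s t) (hadj : ∀ a ∈ s, ∀ b ∈ t, ¬G.Adj a b) :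
    indepPoly (G.induce (s ∪ t)) = indepPoly (G.induce s) * indepPoly (G.induce t) := by
  have := Fintype.ofFinite V
  classical
  simp only [indepPoly_induce_eq_sum, sum_mul_sum, ← sum_product']
  symm
  refine sum_nbij' (fun p => p.1 ∪ p.2) (fun A => (A.filter (· ∈ s), A.filter (· ∈ t)))
    (fun p hp => ?_) (fun A hA => ?_) (fun p hp => ?_) (fun A hA => ?_) (fun p hp => ?_)
  · simp only [mem_product, mem_filter, mem_univ, true_and] at hp ⊢
    obtain ⟨⟨hi₁, hs₁⟩, hi₂, ht₂⟩ := hp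
    rw [coe_union, isIndepSet_iff, Set.pairwise_union]
    refine ⟨⟨hi₁, hi₂, fun a ha b hb _ => ⟨hadj a (hs₁ ha) b (ht₂ hb),
      fun h => hadj a (hs₁ ha) b (ht₂ hb) h.symm⟩⟩, Set.union_subset_union hs₁ ht₂⟩
  · simp only [mem_product, mem_filter, mem_univ, true_and, coe_filter] at hA ⊢
    exact ⟨⟨hA.1.mono (fun a ha => ha.1), fun a ha => ha.2⟩,
      ⟨hA.1.mono (fun a ha => ha.1), fun a ha => ha.2⟩⟩
  · simp only [mem_product, mem_filter, mem_univ, true_and] at hp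
    have hs₂ : ∀ a ∈ p.2, a ∉ s := fun a ha has => hst.notMem_of_mem_left has (hp.2.2 ha)
    have ht₁ : ∀ a ∈ p.1, a ∉ t := fun a ha hat => hst.notMem_of_mem_left (hp.1.2 ha) hat
    ext a <;> simp only [mem_filter, mem_union] <;> grind
  · simp only [mem_filter, mem_univ, true_and] at hA
    ext a
    simp only [mem_union, mem_filter]
    exact ⟨fun h => h.elim And.left And.left, fun h => (hA.2 h).imp (⟨h, ·⟩) (⟨h, ·⟩)⟩
  · simp only [mem_product, mem_filter, mem_univ, true_and] at hp
    rw [card_union_of_disjoint (disjoint_coe.1 (hst.mono hp.1.2 hp.2.2)), pow_add]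

theorem indepPoly_eq_add_X_mul [Finite V] (G : SimpleGraph V) (v : V) :
    indepPoly G = indepPoly (G.induce {w | w ≠ v}) +
      X * indepPoly (G.induce {w | w ≠ v ∧ ¬G.Adj v w}) := by
  have := Fintype.ofFinite V
  classical
  rw [indepPoly_eq_sum, indepPoly_induce_eq_sum, indepPoly_induce_eq_sum,
    ← sum_filter_not_add_sum_filter _ (v ∈ ·), filter_filter, mul_sum]
  congr 1
  · refine sum_congr (filter_congr fun A _ => ?_) fun _ _ => rfl
    simp only [Set.subset_def, mem_coe, Set.mem_ofPred_eq]
    exact and_congr_right' ⟨fun hv w hw hwv => hv (hwv ▸ hw), fun h hv => h v hv rfl⟩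
  · refine sum_nbij' (·.erase v) (insert v) (fun A hA => ?_) (fun B hB => ?_)
      (fun A hA => insert_erase (mem_filter.1 hA).2) (fun B hB => erase_insert fun hv => ?_)
      (fun A hA => ?_)
    · simp only [mem_filter, mem_univ, true_and, coe_erase] at hA ⊢
      refine ⟨hA.1.mono Set.sdiff_subset, fun w hw => ⟨hw.2, fun hvw => ?_⟩⟩
      exact hA.1 hA.2 hw.1 (Ne.symm hw.2) hvw
    · simp only [mem_filter, mem_univ, true_and, coe_insert, mem_insert_self, and_true] at hB ⊢
      exact hB.1.insert fun w hw _ => ⟨(hB.2 hw).2, fun h => (hB.2 hw).2 h.symm⟩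
    · simp only [mem_filter, mem_univ, true_and] at hB
      exact (hB.2 hv).1 rfl
    · rw [← card_erase_add_one (mem_filter.1 hA).2, pow_succ']

end IndepPoly

section StablePath

variable {V W : Type*} [LinearOrder V] {G : SimpleGraph V} {u : V}

theorem isStablePath_iff {l : List V} :
    IsStablePath G u l ↔ l.head? = some u ∧ l.Nodup ∧ l.IsChain G.Adj ∧
      ∀ i j (hij : i + 1 < j) (hj : j < l.length), G.Adj l[i] l[j] → l[i + 1] < l[j] := by
  refine ⟨fun ⟨_, hh, hn, hc, hs⟩ =>
      ⟨hh, hn, hc, fun i j hij hj => hs ⟨i, by omega⟩ ⟨j, hj⟩ hij⟩,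
    fun ⟨hh, hn, hc, hs⟩ => ⟨?_, hh, hn, hc, fun i j hij => hs i j hij j.isLt⟩⟩
  rintro rfl
  simp at hh

theorem IsStablePath.exists_eq_cons {l : List V} (h : IsStablePath G u l) : ∃ t, l = u :: t :=
  List.head?_eq_some_iff.1 h.2.1

theorem isStablePath_nil : ¬IsStablePath G u [] := fun h => h.1 rfl

theorem isStablePath_cons_cons_iff {v : V} {t : List V} :
    IsStablePath G u (u :: v :: t) ↔
      G.Adj u v ∧ u ∉ v :: t ∧ (∀ x ∈ t, G.Adj u x → v < x) ∧ IsStablePath G v (v :: t) := by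
  have hstab : (∀ i j (hij : i + 1 < j) (hj : j < (u :: v :: t).length),
      G.Adj (u :: v :: t)[i] (u :: v :: t)[j] → (u :: v :: t)[i + 1] < (u :: v :: t)[j]) ↔
      (∀ x ∈ t, G.Adj u x → v < x) ∧ ∀ i j (hij : i + 1 < j) (hj : j < (v :: t).length),
        G.Adj (v :: t)[i] (v :: t)[j] → (v :: t)[i + 1] < (v :: t)[j] := by
    rw [List.forall_mem_iff_getElem]
    refine ⟨fun h => ⟨fun k hk => h 0 (k + 2) (by omega) (by simp; omega),
      fun i j hij hj => h (i + 1) (j + 1) (by omega)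
        (by simp only [List.length_cons] at hj ⊢; omega)⟩, ?_⟩
    rintro ⟨h₀, h₁⟩ (_ | i) j hij hj
    · obtain ⟨k, rfl⟩ : ∃ k, j = k + 2 := ⟨j - 2, by omega⟩
      exact h₀ k (by simp at hj; omega)
    · obtain ⟨k, rfl⟩ : ∃ k, j = k + 1 := ⟨j - 1, by omega⟩
      exact h₁ i k (by omega) (by simp only [List.length_cons] at hj ⊢; omega)
  simp only [isStablePath_iff, List.head?_cons, List.nodup_cons (a := u), List.isChain_cons_cons,
    hstab]
  tauto

theorem isStablePath_comap_iff [LinearOrder W] {f : W → V} (hf : StrictMono f) {w : W}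
    {m : List W} : IsStablePath (G.comap f) w m ↔ IsStablePath G (f w) (m.map f) := by
  simp only [isStablePath_iff, List.head?_map, Option.map_eq_some_iff, hf.injective.eq_iff,
    exists_eq_right, List.nodup_map_iff hf.injective, List.isChain_map, List.getElem_map,
    List.length_map, comap_adj, hf.lt_iff_lt]
  rfl

theorem List.exists_map_eq_map_append_iff {α β : Type*} {f : α → β} (hf : Injective f)
    {a b : List α} : (∃ x, b.map f = a.map f ++ [x]) ↔ ∃ y, b = a ++ [y] := by
  refine ⟨fun ⟨x, hx⟩ => ?_, fun ⟨y, hy⟩ => ⟨f y, by simp [hy]⟩⟩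
  obtain ⟨y, -, rfl⟩ :=
    List.mem_map.1 (hx ▸ List.mem_append_right _ (List.mem_singleton_self x))
  exact ⟨y, List.map_injective_iff.2 hf (by simpa using hx)⟩

theorem stablePathTree_adj_iff {p q : {l : List V // IsStablePath G u l}} :
    (stablePathTree G u).Adj p q ↔ (∃ x, q.1 = p.1 ++ [x]) ∨ ∃ x, p.1 = q.1 ++ [x] := by
  rw [stablePathTree, fromRel_adj]
  refine ⟨And.right, fun h => ⟨?_, h⟩⟩
  rintro rfl
  obtain ⟨x, hx⟩ | ⟨x, hx⟩ := h <;> simpa using congrArg List.length hx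

theorem eq_sptRoot_iff {p : {l : List V // IsStablePath G u l}} :
    p = sptRoot G u ↔ p.1.length = 1 := by
  refine ⟨by rintro rfl; rfl, fun h => Subtype.ext ?_⟩
  obtain ⟨t, ht⟩ := p.2.exists_eq_cons
  rw [ht, List.length_cons, Nat.add_eq_right, List.length_eq_zero_iff] at h
  rw [ht, h]
  rfl

theorem sptRoot_adj_iff {p : {l : List V // IsStablePath G u l}} :
    (stablePathTree G u).Adj (sptRoot G u) p ↔ p.1.length = 2 := by
  obtain ⟨t, ht⟩ := p.2.exists_eq_cons
  simp [stablePathTree_adj_iff, sptRoot, ht, List.length_eq_one_iff]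

end StablePath

section Branch

variable {V : Type*} [LinearOrder V] {G : SimpleGraph V} {u w : V}

variable (G u w) in
/-- The vertex set of `G^i = G - {u, u_1, …, u_{i-1}}` for `w = u_i`. -/
def branchVerts : Set V := {v | v ≠ u ∧ (G.Adj u v → w ≤ v)}

variable (G u w) in
/-- The vertex set of the subtree `T^i` of `T^<_{G,u}` for `w = u_i`. -/
def branchPaths : Set {l : List V // IsStablePath G u l} := {p | p.1[1]? = some w}

variable (G u) in
/-- The vertex set of `G - u - (N(u) \ S)`, which is that of `G^i` when `S = {u_i, …, u_d}`. -/
def restrictNbrs (S : Finset V) : Set V := {v | v ≠ u ∧ (G.Adj u v → v ∈ S)}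

theorem mem_branchVerts_self (hw : G.Adj u w) : w ∈ branchVerts G u w :=
  ⟨hw.ne', fun _ => le_rfl⟩

theorem restrictNbrs_insert {S : Finset V} (hmin : ∀ x ∈ S, w < x)
    (hup : ∀ a ∈ insert w S, ∀ b, G.Adj u b → a ≤ b → b ∈ insert w S) :
    restrictNbrs G u (insert w S) = branchVerts G u w := by
  ext v
  refine and_congr_right fun _ => forall_congr' fun hv =>
    ⟨fun hv' => ?_, hup w (mem_insert_self w S) v hv⟩
  rcases mem_insert.1 hv' with rfl | h
  exacts [le_rfl, (hmin v h).le]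

theorem restrictNbrs_insert_sdiff {S : Finset V} (hw : G.Adj u w) (hwS : w ∉ S) :
    restrictNbrs G u (insert w S) \ {w} = restrictNbrs G u S := by
  ext v
  simp only [restrictNbrs, Set.mem_sdiff, Set.mem_ofPred_eq, Set.mem_singleton_iff, mem_insert]
  refine ⟨fun ⟨⟨hvu, hv⟩, hvw⟩ => ⟨hvu, fun h => (hv h).resolve_left hvw⟩,
    fun ⟨hvu, hv⟩ => ⟨⟨hvu, fun h => Or.inr (hv h)⟩, ?_⟩⟩
  rintro rfl
  exact hwS (hv hw)

theorem isStablePath_cons_iff (hw : G.Adj u w) {t : List V} :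
    IsStablePath G u (u :: t) ∧ t.head? = some w ↔
      (∀ x ∈ t, x ∈ branchVerts G u w) ∧ IsStablePath G w t := by
  cases t with
  | nil => simp [isStablePath_nil]
  | cons a t =>
    simp only [List.head?_cons, Option.some.injEq]
    constructor
    · rintro ⟨h, rfl⟩
      obtain ⟨-, hu, hlt, ht⟩ := isStablePath_cons_cons_iff.1 h
      refine ⟨fun x hx => ⟨fun hxu => hu (hxu ▸ hx), fun hux => ?_⟩, ht⟩
      rcases List.mem_cons.1 hx with rfl | hx
      exacts [le_rfl, (hlt x hx hux).le]
    · rintro ⟨hB, ht⟩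
      obtain rfl : a = w := Option.some.inj ht.2.1
      refine ⟨isStablePath_cons_cons_iff.2 ⟨hw, fun hu => (hB u hu).1 rfl,
        fun x hx hux => lt_of_le_of_ne ((hB x (List.mem_cons_of_mem _ hx)).2 hux) ?_, ht⟩, rfl⟩
      rintro rfl
      exact (List.nodup_cons.1 ht.2.2.1).1 hx

theorem adj_of_mem_branchPaths {p : {l : List V // IsStablePath G u l}}
    (hp : p ∈ branchPaths G u w) : G.Adj u w := by
  obtain ⟨t, ht⟩ := p.2.exists_eq_cons
  have hp' : (u :: t)[1]? = some w := ht ▸ hp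
  obtain ⟨t', rfl⟩ := List.head?_eq_some_iff.1 (by simpa [List.head?_eq_getElem?] using hp')
  exact (isStablePath_cons_cons_iff.1 (ht ▸ p.2)).1

theorem mem_branchPaths_of_eq_append {p q : {l : List V // IsStablePath G u l}} {x : V}
    (hp : p ∈ branchPaths G u w) (hx : q.1 = p.1 ++ [x]) : q ∈ branchPaths G u w := by
  change q.1[1]? = some w
  rw [hx, List.getElem?_append_left (List.getElem?_eq_some_iff.1 hp).1]
  exact hp

theorem disjoint_branchPaths {a b : V} (hab : a ≠ b) :
    Disjoint (branchPaths G u a) (branchPaths G u b) :=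
  Set.disjoint_left.2 fun _ hp hp' => hab (Option.some.inj (hp.symm.trans hp'))

theorem not_adj_of_mem_branchPaths {a b : V} (hab : a ≠ b)
    {p q : {l : List V // IsStablePath G u l}} (hp : p ∈ branchPaths G u a)
    (hq : q ∈ branchPaths G u b) : ¬(stablePathTree G u).Adj p q := by
  rw [stablePathTree_adj_iff]
  rintro (⟨x, hx⟩ | ⟨x, hx⟩)
  · exact hab (Option.some.inj ((mem_branchPaths_of_eq_append hp hx).symm.trans hq))
  · exact hab (Option.some.inj (hp.symm.trans (mem_branchPaths_of_eq_append hq hx)))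

theorem isStablePath_cons_map_val (hw : G.Adj u w) {m : List (branchVerts G u w)}
    (hm : IsStablePath (G.induce (branchVerts G u w)) ⟨w, mem_branchVerts_self hw⟩ m) :
    IsStablePath G u (u :: m.map Subtype.val) ∧ (m.map Subtype.val).head? = some w := by
  refine (isStablePath_cons_iff hw).2 ⟨fun _ hx => ?_,
    (isStablePath_comap_iff (f := Subtype.val) (Subtype.strictMono_coe _)).1 hm⟩
  obtain ⟨y, -, rfl⟩ := List.mem_map.1 hx
  exact y.2

def consBranch (hw : G.Adj u w)
    (m : {m // IsStablePath (G.induce (branchVerts G u w)) ⟨w, mem_branchVerts_self hw⟩ m}) :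
    branchPaths G u w :=
  ⟨⟨u :: m.1.map Subtype.val, (isStablePath_cons_map_val hw m.2).1⟩, by
    simpa [branchPaths, List.head?_eq_getElem?] using (isStablePath_cons_map_val hw m.2).2⟩

theorem consBranch_length (hw : G.Adj u w) (m) :
    (consBranch hw m).1.1.length = m.1.length + 1 := by
  simp [consBranch]

theorem consBranch_injective (hw : G.Adj u w) : Injective (consBranch hw) := by
  intro a b h
  have h' : u :: a.1.map Subtype.val = u :: b.1.map Subtype.val := congrArg (·.1.1) h
  exact Subtype.ext (List.map_injective_iff.2 Subtype.val_injective (List.cons_injective h'))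

theorem consBranch_surjective (hw : G.Adj u w) : Surjective (consBranch hw) := by
  rintro ⟨⟨l, hl⟩, hp⟩
  obtain ⟨t, rfl⟩ := hl.exists_eq_cons
  have ht : t.head? = some w := by simpa [branchPaths, List.head?_eq_getElem?] using hp
  obtain ⟨hB, ht⟩ := (isStablePath_cons_iff hw).1 ⟨hl, ht⟩
  lift t to List (branchVerts G u w) using hB
  exact ⟨⟨t, (isStablePath_comap_iff (f := Subtype.val) (Subtype.strictMono_coe _)).2 ht⟩, rfl⟩

theorem consBranch_adj_iff (hw : G.Adj u w) {a b} :
    ((stablePathTree G u).induce (branchPaths G u w)).Adj (consBranch hw a) (consBranch hw b) ↔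
      (stablePathTree (G.induce (branchVerts G u w)) ⟨w, mem_branchVerts_self hw⟩).Adj a b := by
  simp only [comap_adj, Embedding.coe_subtype, stablePathTree_adj_iff, consBranch,
    List.cons_append, List.cons.injEq, true_and,
    List.exists_map_eq_map_append_iff Subtype.val_injective]

noncomputable def branchIso (hw : G.Adj u w) :
    stablePathTree (G.induce (branchVerts G u w)) ⟨w, mem_branchVerts_self hw⟩ ≃g
      (stablePathTree G u).induce (branchPaths G u w) where
  toEquiv := Equiv.ofBijective _ ⟨consBranch_injective hw, consBranch_surjective hw⟩
  map_rel_iff' := consBranch_adj_iff hw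

theorem biUnion_branchPaths_neighborFinset [Fintype (G.neighborSet u)] :
    ⋃ w ∈ G.neighborFinset u, branchPaths G u w = {p | p ≠ sptRoot G u} := by
  ext p
  simp only [Set.mem_iUnion, mem_neighborFinset, exists_prop, Set.mem_ofPred_eq, ne_eq,
    eq_sptRoot_iff]
  have hpos := List.length_pos_iff.2 p.2.1
  refine ⟨fun ⟨w, _, hp⟩ => ?_, fun hp => ?_⟩
  · have := (List.getElem?_eq_some_iff.1 hp).1
    omega
  · have hp' : p ∈ branchPaths G u p.1[1] := List.getElem?_eq_getElem (by omega)
    exact ⟨_, adj_of_mem_branchPaths hp', hp'⟩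

end Branch

section Ratio

variable {V : Type*} [Finite V] [LinearOrder V] {G : SimpleGraph V} {u w : V}

variable (G u) in
def StablePathRatio : Prop :=
  indepPoly (G.induce {v | v ≠ u}) * indepPoly (stablePathTree G u) =
    indepPoly G * indepPoly ((stablePathTree G u).induce {p | p ≠ sptRoot G u})

theorem indepPoly_branch_ratio (hw : G.Adj u w)
    (h : StablePathRatio (G.induce (branchVerts G u w)) ⟨w, mem_branchVerts_self hw⟩) :
    indepPoly (G.induce (branchVerts G u w \ {w})) *
        indepPoly ((stablePathTree G u).induce (branchPaths G u w)) =
      indepPoly (G.induce (branchVerts G u w)) *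
        indepPoly ((stablePathTree G u).induce (branchPaths G u w ∩ {p | 2 < p.1.length})) := by
  set w' : branchVerts G u w := ⟨w, mem_branchVerts_self hw⟩
  have hG : indepPoly ((G.induce (branchVerts G u w)).induce {x | x ≠ w'}) =
      indepPoly (G.induce (branchVerts G u w \ {w})) := by
    rw [indepPoly_induce_induce]
    refine indepPoly_induce_congr G ?_
    ext; simp [w', and_comm]
  have hT : indepPoly ((stablePathTree (G.induce (branchVerts G u w)) w').induce
      {m | m ≠ sptRoot _ w'}) =
      indepPoly ((stablePathTree G u).induce (branchPaths G u w ∩ {p | 2 < p.1.length})) := by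
    have hpre : branchIso hw ⁻¹' {p | 2 < p.1.1.length} = {m | m ≠ sptRoot _ w'} := by
      ext m
      have := List.length_pos_iff.2 m.2.1
      change 2 < (consBranch hw m).1.1.length ↔ m ≠ sptRoot _ w'
      rw [consBranch_length, ne_eq, eq_sptRoot_iff]
      omega
    rw [← hpre, indepPoly_induce_preimage, indepPoly_induce_induce]
    refine indepPoly_induce_congr _ ?_
    ext; simp [and_comm]
  rw [← hG, ← hT, ← indepPoly_congr (branchIso hw)]
  exact h

theorem indepPoly_induce_union_branchPaths {S : Finset V} (hwS : w ∉ S)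
    {s t : Set {l : List V // IsStablePath G u l}} (hs : s ⊆ branchPaths G u w)
    (ht : t ⊆ ⋃ x ∈ S, branchPaths G u x) :
    indepPoly ((stablePathTree G u).induce (s ∪ t)) =
      indepPoly ((stablePathTree G u).induce s) * indepPoly ((stablePathTree G u).induce t) := by
  refine indepPoly_induce_union _ (Set.disjoint_of_subset hs ht ?_) fun p hp q hq => ?_
  · exact Set.disjoint_iUnion₂_right.2 fun x hx =>
      disjoint_branchPaths (ne_of_mem_of_not_mem hx hwS).symm
  · obtain ⟨x, hx, hq⟩ := Set.mem_iUnion₂.1 (ht hq)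
    exact not_adj_of_mem_branchPaths (ne_of_mem_of_not_mem hx hwS).symm (hs hp) hq

theorem indepPoly_ratio_biUnion_branchPaths {S : Finset V} (hS : ∀ w ∈ S, G.Adj u w)
    (hup : ∀ a ∈ S, ∀ b, G.Adj u b → a ≤ b → b ∈ S)
    (ih : ∀ w (hw : G.Adj u w),
      StablePathRatio (G.induce (branchVerts G u w)) ⟨w, mem_branchVerts_self hw⟩) :
    indepPoly (G.induce (restrictNbrs G u S)) *
        indepPoly ((stablePathTree G u).induce
          ((⋃ w ∈ S, branchPaths G u w) ∩ {p | 2 < p.1.length})) =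
      indepPoly (G.induce (restrictNbrs G u ∅)) *
        indepPoly ((stablePathTree G u).induce (⋃ w ∈ S, branchPaths G u w)) := by
  classical
  induction S using Finset.induction_on_min with
  | empty =>
    have hP : ⋃ w ∈ (∅ : Finset V), branchPaths G u w = ∅ := by simp
    have hP' : (⋃ w ∈ (∅ : Finset V), branchPaths G u w) ∩ {p | 2 < p.1.length} = ∅ := by
      rw [hP, Set.empty_inter]
    rw [indepPoly_induce_congr _ hP, indepPoly_induce_congr _ hP']
  | insert w S hmin ihS =>
    have hw : G.Adj u w := hS w (mem_insert_self w S)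
    have hwS : w ∉ S := fun h => (hmin w h).false
    have hup' : ∀ a ∈ S, ∀ b, G.Adj u b → a ≤ b → b ∈ S := fun a ha b hb hab =>
      (mem_insert.1 (hup a (mem_insert_of_mem ha) b hb hab)).resolve_left
        fun hbw => ((hmin a ha).trans_le hab).ne' hbw
    have hA : restrictNbrs G u S = branchVerts G u w \ {w} := by
      rw [← restrictNbrs_insert_sdiff hw hwS, restrictNbrs_insert hmin hup]
    have hS' := ihS (fun x hx => hS x (mem_insert_of_mem hx)) hup'
    rw [indepPoly_induce_congr _ hA] at hS'
    have hP : ⋃ x ∈ insert w S, branchPaths G u x =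
        branchPaths G u w ∪ ⋃ x ∈ S, branchPaths G u x := Finset.set_biUnion_insert _ _ _
    have hP' : (⋃ x ∈ insert w S, branchPaths G u x) ∩ {p | 2 < p.1.length} =
        branchPaths G u w ∩ {p | 2 < p.1.length} ∪
          (⋃ x ∈ S, branchPaths G u x) ∩ {p | 2 < p.1.length} := by
      rw [hP, Set.union_inter_distrib_right]
    rw [indepPoly_induce_congr _ (restrictNbrs_insert hmin hup), indepPoly_induce_congr _ hP,
      indepPoly_induce_congr _ hP', indepPoly_induce_union_branchPaths hwS subset_rfl subset_rfl,
      indepPoly_induce_union_branchPaths hwS Set.inter_subset_left Set.inter_subset_left,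
      ← mul_assoc, ← indepPoly_branch_ratio hw (ih w hw), mul_right_comm, hS']
    ring

theorem stablePathRatio_of_branches
    (ih : ∀ w (hw : G.Adj u w),
      StablePathRatio (G.induce (branchVerts G u w)) ⟨w, mem_branchVerts_self hw⟩) :
    StablePathRatio G u := by
  classical
  have := Fintype.ofFinite V
  have hT : (⋃ w ∈ G.neighborFinset u, branchPaths G u w) ∩ {p | 2 < p.1.length} =
      {p | p ≠ sptRoot G u ∧ ¬(stablePathTree G u).Adj (sptRoot G u) p} := by
    rw [biUnion_branchPaths_neighborFinset]
    ext p
    have := List.length_pos_iff.2 p.2.1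
    simp only [Set.mem_inter_iff, Set.mem_ofPred_eq, ne_eq, eq_sptRoot_iff, sptRoot_adj_iff]
    omega
  have hG : restrictNbrs G u (G.neighborFinset u) = {v | v ≠ u} := by ext; simp [restrictNbrs]
  have hG' : restrictNbrs G u ∅ = {v | v ≠ u ∧ ¬G.Adj u v} := by ext; simp [restrictNbrs]
  have key := indepPoly_ratio_biUnion_branchPaths (S := G.neighborFinset u)
    (fun w hw => (mem_neighborFinset _ _ _).1 hw)
    (fun _ _ b hb _ => (mem_neighborFinset _ _ _).2 hb) ih
  rw [indepPoly_induce_congr _ biUnion_branchPaths_neighborFinset, indepPoly_induce_congr _ hT,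
    indepPoly_induce_congr _ hG, indepPoly_induce_congr _ hG'] at key
  rw [StablePathRatio, indepPoly_eq_add_X_mul G u,
    indepPoly_eq_add_X_mul (stablePathTree G u) (sptRoot G u)]
  linear_combination X * key

end Ratio

theorem indepPoly_stablePathTree_ratio {V : Type*} [Finite V] [LinearOrder V]
    (G : SimpleGraph V) (u : V) :
    indepPoly (G.comap (Subtype.val : {v : V // v ≠ u} → V)) *
        indepPoly (stablePathTree G u) =
      indepPoly G *
        indepPoly ((stablePathTree G u).comap
          (Subtype.val :
            {p : {l : List V // IsStablePath G u l} // p ≠ sptRoot G u} →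
              {l : List V // IsStablePath G u l})) := by
  induction hn : Nat.card V using Nat.strong_induction_on generalizing V with
  | _ n ih =>
  refine stablePathRatio_of_branches fun w hw => ?_
  exact ih _ (hn ▸ Finite.card_subtype_lt (x := u) fun h => h.1 rfl) _ _ rfl
end
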